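/- arXiv:2204.05484 — 7 statements merged into one kernel-verified Lean document; each statement's English description precedes it below -/
import Mathlib

section
/- Let G be a group that is generalized quasi-dihedral on an abelian subgroup K and an element b. If x ∈ G ∖ K has finite order, then G is generalized quasi-dihedral on K and x, and moreover x⁴ = 1. -/
/-- `G` is generalized quasi-dihedral on the abelian subgroup `K` and the element `b`:
`K` is abelian of index 2, `b ∉ K`, `b` has finite order, and conjugation by `b`
inverts every element of `K`. -/
def IsGQD {G : Type*} [Group G] (K : Subgroup G) (b : G) : Prop :=
  (∀ x ∈ K, ∀ y ∈ K, x * y = y * x) ∧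
  K.index = 2 ∧ b ∉ K ∧ IsOfFinOrder b ∧
  ∀ k ∈ K, b * k * b⁻¹ = k⁻¹

theorem gqd_on_any_finite_order_element {G : Type*} [Group G]
    (K : Subgroup G) (b : G) (hGQD : IsGQD K b)
    (x : G) (hx : x ∉ K) (hxord : IsOfFinOrder x) :
    IsGQD K x ∧ x ^ 4 = 1 := by
  obtain ⟨hab, hidx, hb, hbord, hconj⟩ := hGQD
  have hk : x * b⁻¹ ∈ K := by
    rw [Subgroup.mul_mem_iff_of_index_two hidx]
    simp [hx, hb]
  set k := x * b⁻¹ with hkdef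
  have hxkb : x = k * b := by rw [hkdef]; group
  have hconjx : ∀ c ∈ K, x * c * x⁻¹ = c⁻¹ := by
    intro c hc
    have h1 : b * c * b⁻¹ = c⁻¹ := hconj c hc
    have h2 : k * c⁻¹ = c⁻¹ * k := hab k hk c⁻¹ (inv_mem hc)
    calc x * c * x⁻¹ = k * (b * c * b⁻¹) * k⁻¹ := by rw [hxkb]; group
      _ = k * c⁻¹ * k⁻¹ := by rw [h1]
      _ = c⁻¹ := by rw [h2]; group
  refine ⟨⟨hab, hidx, hx, hxord, hconjx⟩, ?_⟩
  have hsq : x ^ 2 ∈ K := Subgroup.sq_mem_of_index_two hidx x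
  have := hconjx (x ^ 2) hsq
  have h4 : x ^ 2 = (x ^ 2)⁻¹ := by
    calc x ^ 2 = x * x ^ 2 * x⁻¹ := by group
      _ = (x ^ 2)⁻¹ := this
  have : x ^ 2 * x ^ 2 = 1 := by nth_rewrite 2 [h4]; group
  calc x ^ 4 = x ^ 2 * x ^ 2 := by group
    _ = 1 := this
end

section
/- Let G be a finite group that is generalized quasi-dihedral on an abelian subgroup K and an element b. Then for every generating set S of G with 1 ∉ S, the Cayley graph Cay(G,S) has a Hamiltonian path, i.e., a path visiting every vertex of Cay(G,S) exactly once. -/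
/-- The Cayley graph of `G` with respect to `S`: vertices are elements of `G`,
and `g, h` are adjacent iff `g ≠ h` and `g⁻¹ * h ∈ S ∪ S⁻¹`. -/
def cayleyGraph {G : Type*} [Group G] (S : Set G) : SimpleGraph G where
  Adj g h := g ≠ h ∧ g⁻¹ * h ∈ S ∪ S⁻¹
  symm := by
    constructor
    rintro g h ⟨hne, hmem⟩
    refine ⟨hne.symm, ?_⟩
    have h' : h⁻¹ * g = (g⁻¹ * h)⁻¹ := by group
    rcases hmem with hs | hs
    · exact Or.inr (by rw [h']; simpa [Set.mem_inv] using hs)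
    · exact Or.inl (by rw [h']; exact Set.mem_inv.mp hs)
  loopless := by constructor; rintro g ⟨hne, -⟩; exact hne rfl

/-!
Conjugation by any element outside `K` inverts `K`. Fix `a ∈ S \ K`; every element of `G` is
uniquely `x a^f` with `x ∈ K`, `f ∈ {0, 1}`, and left multiplication by `K` acts on the Cayley
graph by automorphisms preserving the two layers `K` and `K a`.

Hamiltonian paths through `L ∪ L a` are grown along a chain of subgroups `L ≤ K`, one
generator `c` at a time, by concatenating translates of a path `P` by `c^i`, `i < [⟨L, c⟩ : L]`.
Starting from the path `a, 1`, we first add the `w ∈ K` with `w a ∈ S^{±1}`: `P` runs from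
`L a` to `L`, and consecutive translates are joined by translates of the edge from the end `p`
of `P` to `w p a`.
Then we add the `t ∈ K ∩ S^{±1}`: every vertex `v` is adjacent to `t v`, so the translates can
be joined if every other one is reversed. The two kinds of generators are the Schreier generators
of `K` for the transversal `{1, a}`, so the final path covers `G`.
-/

namespace SimpleGraph

variable {V W : Type*} (Γ : SimpleGraph V)

structure IsHamiltonianListOn (l : List V) (X : Set V) : Prop where
  isChain : l.IsChain Γ.Adj
  nodup : l.Nodup
  mem_iff : ∀ v, v ∈ l ↔ v ∈ X

namespace IsHamiltonianListOn

variable {Γ} {l l₁ l₂ : List V} {X X₁ X₂ : Set V}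

theorem reverse (h : Γ.IsHamiltonianListOn l X) : Γ.IsHamiltonianListOn l.reverse X :=
  ⟨List.isChain_reverse.mpr (h.isChain.imp fun _ _ hab => hab.symm),
    List.nodup_reverse.mpr h.nodup, fun v => List.mem_reverse.trans (h.mem_iff v)⟩

theorem append (h₁ : Γ.IsHamiltonianListOn l₁ X₁) (h₂ : Γ.IsHamiltonianListOn l₂ X₂)
    (hX : Disjoint X₁ X₂) (hadj : ∀ x ∈ l₁.getLast?, ∀ y ∈ l₂.head?, Γ.Adj x y) :
    Γ.IsHamiltonianListOn (l₁ ++ l₂) (X₁ ∪ X₂) where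
  isChain := List.isChain_append.mpr ⟨h₁.isChain, h₂.isChain, hadj⟩
  nodup := List.nodup_append.mpr ⟨h₁.nodup, h₂.nodup, fun _ ha _ hb hab =>
    Set.disjoint_left.mp hX ((h₁.mem_iff _).mp ha) ((h₂.mem_iff _).mp (hab ▸ hb))⟩
  mem_iff v := by rw [List.mem_append, h₁.mem_iff, h₂.mem_iff, Set.mem_union]

theorem map {Γ' : SimpleGraph W} {f : V → W} (hadj : ∀ ⦃v w⦄, Γ.Adj v w → Γ'.Adj (f v) (f w))
    (hf : Function.Injective f) (h : Γ.IsHamiltonianListOn l X) :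
    Γ'.IsHamiltonianListOn (l.map f) (f '' X) where
  isChain := (List.isChain_map f).mpr (h.isChain.imp hadj)
  nodup := h.nodup.map hf
  mem_iff w := by simp only [List.mem_map, h.mem_iff, Set.mem_image]

theorem ne_nil_of_mem {v : V} (h : Γ.IsHamiltonianListOn l X) (hv : v ∈ X) : l ≠ [] := by
  rintro rfl
  simpa using (h.mem_iff v).mpr hv

theorem exists_walk_isHamiltonian [DecidableEq V] [Nonempty V]
    (h : Γ.IsHamiltonianListOn l Set.univ) : ∃ (u v : V) (p : Γ.Walk u v), p.IsHamiltonian := by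
  have hne := h.ne_nil_of_mem (Set.mem_univ (Classical.arbitrary V))
  refine ⟨_, _, Walk.ofSupport l hne h.isChain, fun v => ?_⟩
  rw [Walk.support_ofSupport]
  exact List.count_eq_one_of_mem h.nodup ((h.mem_iff v).mpr trivial)

end IsHamiltonianListOn

end SimpleGraph

namespace Subgroup

theorem sup_zpowers_mul_left {G : Type*} [Group G] {H : Subgroup G} {h : G} (hh : h ∈ H)
    (c : G) : H ⊔ zpowers (h * c) = H ⊔ zpowers c := by
  refine le_antisymm (sup_le le_sup_left ?_) (sup_le le_sup_left ?_) <;> rw [zpowers_le]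
  · exact mul_mem (mem_sup_left hh) (mem_sup_right (mem_zpowers c))
  · simpa using mul_mem (mem_sup_left (inv_mem hh)) (mem_sup_right (mem_zpowers (h * c)))

theorem sup_closure_induction {G : Type*} [Group G] {P : Subgroup G → Prop} {T : Set G}
    (hT : T.Finite) (step : ∀ H, ∀ t ∈ T, P H → P (H ⊔ zpowers t)) {H : Subgroup G}
    (hH : P H) : P (H ⊔ closure T) := by
  refine Set.Finite.induction_on_subset (motive := fun T' _ => P (H ⊔ closure T')) T hT
    (by simpa using hH) fun {t T'} htT _ _ ih => ?_
  rw [Set.insert_eq, closure_union, ← zpowers_eq_closure, sup_comm _ (closure T'), ← sup_assoc]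
  exact step _ t htT ih

theorem mem_sup_zpowers_iff {A : Type*} [CommGroup A] [Finite A] {H : Subgroup A} {c x : A} :
    x ∈ H ⊔ zpowers c ↔ ∃ i < orderOf (c : A ⧸ H), (x : A ⧸ H) = c ^ i := by
  classical
  have : H ⊔ zpowers c = (zpowers (QuotientGroup.mk' H c)).comap (QuotientGroup.mk' H) := by
    rw [← MonoidHom.map_zpowers, comap_map_eq, QuotientGroup.ker_mk', sup_comm]
  rw [this, mem_comap, mem_zpowers_iff_mem_range_orderOf, Finset.mem_image]
  simp only [Finset.mem_range, QuotientGroup.mk'_apply, eq_comm]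

end Subgroup

/-- `snake τ l l' n` is the concatenation `l ++ τ l' ++ τ² l ++ τ³ l' ++ ⋯` of `n` blocks. -/
def snake {V : Type*} (τ : V → V) : List V → List V → ℕ → List V
  | _, _, 0 => []
  | l, l', n + 1 => l ++ (snake τ l' l n).map τ

section Snake

variable {V : Type*} (τ : V → V)

theorem head?_snake_succ {l : List V} (hl : l ≠ []) (l' : List V) (n : ℕ) :
    (snake τ l l' (n + 1)).head? = l.head? := by
  obtain ⟨v, l, rfl⟩ := List.exists_cons_of_ne_nil hl
  rfl

theorem forall_mem_getLast?_snake {P : V → Prop} (hP : ∀ v, P v → P (τ v)) :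
    ∀ (n : ℕ) {l l' : List V}, (∀ v ∈ l.getLast?, P v) → (∀ v ∈ l'.getLast?, P v) →
      ∀ v ∈ (snake τ l l' n).getLast?, P v
  | 0, _, _, _, _ => by simp [snake]
  | n + 1, l, l', hl, hl' => by
    rw [snake, List.getLast?_append, List.getLast?_map]
    cases h : (snake τ l' l n).getLast? with
    | none => exact hl
    | some u =>
      rintro v ⟨⟩
      exact hP u (forall_mem_getLast?_snake hP n hl' hl u h)

end Snake

section LayerShift

variable {A : Type*} [Group A]

def layerShift (c : A) : A × Bool → A × Bool := Prod.map (c * ·) id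

theorem layerShift_injective (c : A) : Function.Injective (layerShift c) :=
  (mul_right_injective c).prodMap Function.injective_id

theorem mem_image_layerShift {c : A} {X : Set (A × Bool)} {v : A × Bool} :
    v ∈ layerShift c '' X ↔ (c⁻¹ * v.1, v.2) ∈ X := by
  constructor
  · rintro ⟨u, hu, rfl⟩
    simpa [layerShift] using hu
  · exact fun hv => ⟨_, hv, by simp [layerShift]⟩

end LayerShift

section Layers

open Subgroup

variable {A : Type*} [CommGroup A] {Γ : SimpleGraph (A × Bool)}
  (hΓ : ∀ c v w, Γ.Adj v w → Γ.Adj (layerShift c v) (layerShift c w))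
include hΓ

theorem isHamiltonianListOn_snake {H : Subgroup A} {c : A} (n : ℕ) (hn : n ≤ orderOf (c : A ⧸ H))
    {l l' : List (A × Bool)} (hl : Γ.IsHamiltonianListOn l {v | v.1 ∈ H})
    (hl' : Γ.IsHamiltonianListOn l' {v | v.1 ∈ H})
    (hll' : ∀ x ∈ l.getLast?, ∀ y ∈ l'.head?, Γ.Adj x (layerShift c y))
    (hl'l : ∀ x ∈ l'.getLast?, ∀ y ∈ l.head?, Γ.Adj x (layerShift c y)) :
    Γ.IsHamiltonianListOn (snake (layerShift c) l l' n)
      {v | ∃ i < n, (v.1 : A ⧸ H) = (c : A ⧸ H) ^ i} := by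
  induction n generalizing l l' with
  | zero => exact ⟨List.isChain_nil, List.nodup_nil, by simp [snake]⟩
  | succ n ih =>
    have hrest := (ih (by omega) hl' hl hl'l hll').map (hΓ c) (layerShift_injective c)
    have hmem : ∀ {v : A × Bool}, v.1 ∈ H ↔ (v.1 : A ⧸ H) = 1 :=
      (QuotientGroup.eq_one_iff _).symm
    have hshift : ∀ {x : A} {i : ℕ}, ((c⁻¹ * x : A) : A ⧸ H) = (c : A ⧸ H) ^ i ↔
        (x : A ⧸ H) = (c : A ⧸ H) ^ (i + 1) := by
      intro x i
      rw [QuotientGroup.mk_mul, QuotientGroup.mk_inv, inv_mul_eq_iff_eq_mul, pow_succ']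
    have hset : {v : A × Bool | ∃ i < n + 1, (v.1 : A ⧸ H) = (c : A ⧸ H) ^ i} =
        {v | v.1 ∈ H} ∪ layerShift c '' {v | ∃ i < n, (v.1 : A ⧸ H) = (c : A ⧸ H) ^ i} := by
      refine Set.ext fun v => ?_
      simp only [Set.mem_union, mem_image_layerShift, Set.mem_ofPred_eq, hmem, hshift,
        Nat.exists_lt_succ_left, pow_zero]
    rw [hset]
    refine hl.append hrest (Set.disjoint_left.mpr fun v hv hv' => ?_) fun x hx y hy => ?_
    · obtain ⟨i, hi, hvi⟩ := mem_image_layerShift.mp hv'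
      rw [Set.mem_ofPred_eq, hmem] at hv
      rw [hshift, hv] at hvi
      exact pow_ne_one_of_lt_orderOf i.succ_ne_zero (by omega) hvi.symm
    · rw [List.head?_map] at hy
      obtain ⟨z, hz, rfl⟩ := Option.mem_map.mp hy
      cases n with
      | zero => simp [snake] at hz
      | succ n =>
        rw [head?_snake_succ _ (hl'.ne_nil_of_mem (v := (1, false)) H.one_mem)] at hz
        exact hll' x hx z hz

theorem isHamiltonianListOn_snake_orderOf [Finite A] {H : Subgroup A} {c : A}
    {l l' : List (A × Bool)} (hl : Γ.IsHamiltonianListOn l {v | v.1 ∈ H})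
    (hl' : Γ.IsHamiltonianListOn l' {v | v.1 ∈ H})
    (hll' : ∀ x ∈ l.getLast?, ∀ y ∈ l'.head?, Γ.Adj x (layerShift c y))
    (hl'l : ∀ x ∈ l'.getLast?, ∀ y ∈ l.head?, Γ.Adj x (layerShift c y)) :
    Γ.IsHamiltonianListOn (snake (layerShift c) l l' (orderOf (c : A ⧸ H)))
      {v | v.1 ∈ H ⊔ zpowers c} := by
  simp_rw [mem_sup_zpowers_iff]
  exact isHamiltonianListOn_snake hΓ _ le_rfl hl hl' hll' hl'l

theorem exists_isHamiltonianListOn_sup_zpowers [Finite A] {H : Subgroup A} {t : A}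
    (ht : ∀ v, Γ.Adj v (layerShift t v)) {l : List (A × Bool)}
    (hl : Γ.IsHamiltonianListOn l {v | v.1 ∈ H}) :
    ∃ l', Γ.IsHamiltonianListOn l' {v | v.1 ∈ H ⊔ zpowers t} := by
  refine ⟨_, isHamiltonianListOn_snake_orderOf hΓ hl hl.reverse ?_ ?_⟩
  · intro x hx y hy
    rw [List.head?_reverse] at hy
    rw [Option.mem_unique hy hx]
    exact ht x
  · intro x hx y hy
    rw [List.getLast?_reverse] at hx
    rw [Option.mem_unique hy hx]
    exact ht x

theorem exists_isHamiltonianListOn_sup_zpowers_of_adj_false_true [Finite A] {H : Subgroup A}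
    {w : A} (hw : ∀ x, Γ.Adj (x, false) (w * x, true)) {l : List (A × Bool)}
    (hl : Γ.IsHamiltonianListOn l {v | v.1 ∈ H}) (hhead : ∀ v ∈ l.head?, v.2 = true)
    (hlast : ∀ v ∈ l.getLast?, v.2 = false) :
    ∃ l', Γ.IsHamiltonianListOn l' {v | v.1 ∈ H ⊔ zpowers w} ∧
      (∀ v ∈ l'.head?, v.2 = true) ∧ ∀ v ∈ l'.getLast?, v.2 = false := by
  have hne := hl.ne_nil_of_mem (v := (1, false)) H.one_mem
  obtain ⟨⟨q, fq⟩, hq⟩ : ∃ v, l.head? = some v := ⟨_, List.head?_eq_some_head hne⟩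
  obtain ⟨⟨p, fp⟩, hp⟩ : ∃ v, l.getLast? = some v := ⟨_, List.getLast?_eq_some_getLast hne⟩
  obtain rfl : fq = true := hhead _ hq
  obtain rfl : fp = false := hlast _ hp
  have hqH : q ∈ H := (hl.mem_iff _).mp (List.mem_of_mem_head? hq)
  have hpH : p ∈ H := (hl.mem_iff _).mp (List.mem_of_mem_getLast? hp)
  -- the shift is chosen so that the last vertex `(p, false)` is joined to the next block's
  -- first vertex `(w * p, true)`
  have hjoin : ∀ x ∈ l.getLast?, ∀ y ∈ l.head?, Γ.Adj x (layerShift (p * q⁻¹ * w) y) := by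
    rintro x hx y hy
    rw [hp, Option.mem_some_iff] at hx
    rw [hq, Option.mem_some_iff] at hy
    subst hx hy
    have : layerShift (p * q⁻¹ * w) (q, true) = (w * p, true) := by
      simp only [layerShift, Prod.map_apply, id_eq, Prod.mk.injEq, and_true]
      rw [mul_right_comm, inv_mul_cancel_right, mul_comm]
    rw [this]
    exact hw p
  have hsnake := isHamiltonianListOn_snake_orderOf hΓ hl hl hjoin hjoin
  rw [sup_zpowers_mul_left (mul_mem hpH (inv_mem hqH))] at hsnake
  obtain ⟨n, hn⟩ := Nat.exists_eq_add_one_of_ne_zero (orderOf_pos ((p * q⁻¹ * w : A) : A ⧸ H)).ne'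
  refine ⟨_, hsnake, ?_, forall_mem_getLast?_snake (layerShift _) (fun _ h => h) _ hlast hlast⟩
  rw [hn, head?_snake_succ _ hne]
  exact hhead

theorem exists_isHamiltonianListOn_closure_sup_closure [Finite A] (T W : Set A)
    (hT : ∀ t ∈ T, ∀ v, Γ.Adj v (layerShift t v))
    (hW : ∀ w ∈ W, ∀ x, Γ.Adj (x, false) (w * x, true)) (h1 : Γ.Adj (1, true) (1, false)) :
    ∃ l, Γ.IsHamiltonianListOn l {v | v.1 ∈ closure W ⊔ closure T} := by
  have hbase : Γ.IsHamiltonianListOn [(1, true), (1, false)] {v | v.1 ∈ (⊥ : Subgroup A)} :=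
    ⟨List.isChain_pair.mpr h1, by simp, fun ⟨x, f⟩ => by cases f <;> simp [eq_comm]⟩
  obtain ⟨l, hl, -⟩ := sup_closure_induction (P := fun H => ∃ l,
      Γ.IsHamiltonianListOn l {v | v.1 ∈ H} ∧
        (∀ v ∈ l.head?, v.2 = true) ∧ ∀ v ∈ l.getLast?, v.2 = false) W.toFinite
    (fun _ w hw ⟨_, hl, hhead, hlast⟩ =>
      exists_isHamiltonianListOn_sup_zpowers_of_adj_false_true hΓ (hW w hw) hl hhead hlast)
    ⟨_, hbase, by simp, by simp⟩
  rw [bot_sup_eq] at hl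
  exact sup_closure_induction (P := fun H => ∃ l, Γ.IsHamiltonianListOn l {v | v.1 ∈ H})
    T.toFinite (fun _ t ht ⟨_, hl⟩ => exists_isHamiltonianListOn_sup_zpowers hΓ (hT t ht) hl)
    ⟨l, hl⟩

end Layers

theorem Set.inv_mem_union_inv {α : Type*} [InvolutiveInv α] {S : Set α} {s : α}
    (hs : s ∈ S ∪ S⁻¹) : s⁻¹ ∈ S ∪ S⁻¹ := by
  rwa [← Set.mem_inv, Set.union_inv, inv_inv, Set.union_comm]

section CayleyGraph

variable {G : Type*} [Group G] {S : Set G}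

theorem cayleyGraph_adj_mul_left {c g h : G} :
    (cayleyGraph S).Adj (c * g) (c * h) ↔ (cayleyGraph S).Adj g h := by
  simp only [cayleyGraph, ne_eq, mul_right_inj, mul_inv_rev, mul_assoc, inv_mul_cancel_left]

theorem cayleyGraph_adj_mul_right (hS : (1 : G) ∉ S) {s : G} (hs : s ∈ S ∪ S⁻¹) (g : G) :
    (cayleyGraph S).Adj g (g * s) := by
  refine ⟨fun h => ?_, by rwa [inv_mul_cancel_left]⟩
  rw [left_eq_mul] at h
  subst h
  rcases hs with hs | hs
  · exact hS hs
  · exact hS (by simpa using hs)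

end CayleyGraph

theorem IsGQD.mul_eq_inv_mul {G : Type*} [Group G] {K : Subgroup G} {b : G} (h : IsGQD K b)
    {x k : G} (hx : x ∉ K) (hk : k ∈ K) : x * k = k⁻¹ * x := by
  obtain ⟨hcomm, hidx, hbK, -, hb⟩ := h
  have hy : x * b⁻¹ ∈ K := by
    rw [Subgroup.mul_mem_iff_of_index_two hidx, inv_mem_iff]
    exact iff_of_false hx hbK
  calc x * k = x * b⁻¹ * (b * k * b⁻¹) * b := by group
    _ = k⁻¹ * (x * b⁻¹) * b := by rw [hb k hk, hcomm _ hy _ (inv_mem hk)]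
    _ = k⁻¹ * x := by group

section LayerMap

open Subgroup

variable {G : Type*} [Group G] {S : Set G} {K : Subgroup G} {a : G}

def layerMap (K : Subgroup G) (a : G) (v : K × Bool) : G := v.1 * cond v.2 a 1

theorem layerMap_layerShift (c : K) (v : K × Bool) :
    layerMap K a (layerShift c v) = c * layerMap K a v := by
  simp [layerMap, layerShift, mul_assoc]

theorem layerMap_injective (haK : a ∉ K) : Function.Injective (layerMap K a) := by
  rintro ⟨x, f⟩ ⟨y, g⟩ h
  cases f <;> cases g <;> simp only [layerMap, cond_false, cond_true, mul_one, mul_left_inj] at h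
  · exact Prod.ext (Subtype.ext h) rfl
  · exact absurd (by simpa [h] using mul_mem (inv_mem y.2) x.2 : a ∈ K) haK
  · exact absurd (by simpa [← h] using mul_mem (inv_mem x.2) y.2 : a ∈ K) haK
  · exact Prod.ext (Subtype.ext h) rfl

-- `k` is a Schreier generator of `K` for the transversal `{1, a}`, or its inverse.
theorem exists_layerMap_eq_mul (hK : K.index = 2) (haK : a ∉ K) (ha : ∀ k ∈ K, a * k = k⁻¹ * a)
    (v : K × Bool) {s : G} (hs : s ∈ S ∪ S⁻¹) :
    ∃ k ∈ closure {w : K | (w : G) * a ∈ S ∪ S⁻¹} ⊔ closure {t : K | (t : G) ∈ S ∪ S⁻¹},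
      ∃ f, layerMap K a (v.1 * k, f) = layerMap K a v * s := by
  obtain ⟨x, f⟩ := v
  by_cases hsK : s ∈ K
  · have ht : (⟨s, hsK⟩ : K) ∈ closure {t : K | (t : G) ∈ S ∪ S⁻¹} := subset_closure hs
    cases f
    · exact ⟨_, mem_sup_right ht, false, by simp [layerMap]⟩
    · exact ⟨_, mem_sup_right (inv_mem ht), true, by simp [layerMap, mul_assoc, ha s hsK]⟩
  · have hmem : ∀ {y : G}, y ∉ K → y * a⁻¹ ∈ K := fun hy => by
      rw [mul_mem_iff_of_index_two hK, inv_mem_iff]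
      exact iff_of_false hy haK
    cases f
    · have hw : (⟨s * a⁻¹, hmem hsK⟩ : K) ∈ closure {w : K | (w : G) * a ∈ S ∪ S⁻¹} :=
        subset_closure (by simpa using hs)
      exact ⟨_, mem_sup_left hw, true, by simp [layerMap, mul_assoc]⟩
    · have hw : (⟨s⁻¹ * a⁻¹, hmem (fun h => hsK (inv_mem_iff.mp h))⟩ : K) ∈
          closure {w : K | (w : G) * a ∈ S ∪ S⁻¹} :=
        subset_closure (by simpa using Set.inv_mem_union_inv hs)
      exact ⟨_, mem_sup_left (inv_mem hw), false, by simp [layerMap, mul_assoc]⟩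

theorem exists_layerMap_eq (hK : K.index = 2) (haK : a ∉ K) (ha : ∀ k ∈ K, a * k = k⁻¹ * a)
    (hSgen : closure S = ⊤) (g : G) :
    ∃ v : K × Bool, v.1 ∈ closure {w : K | (w : G) * a ∈ S ∪ S⁻¹} ⊔
        closure {t : K | (t : G) ∈ S ∪ S⁻¹} ∧ layerMap K a v = g := by
  have hg : g ∈ closure S := hSgen ▸ mem_top g
  induction hg using closure_induction_right with
  | one => exact ⟨(1, false), one_mem _, by simp [layerMap]⟩
  | mul_right _ _ s hs ih =>
    obtain ⟨v, hv, rfl⟩ := ih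
    obtain ⟨k, hk, f, hf⟩ := exists_layerMap_eq_mul hK haK ha v (Or.inl hs)
    exact ⟨(v.1 * k, f), mul_mem hv hk, hf⟩
  | mul_inv_cancel _ _ s hs ih =>
    obtain ⟨v, hv, rfl⟩ := ih
    obtain ⟨k, hk, f, hf⟩ :=
      exists_layerMap_eq_mul hK haK ha v (Set.inv_mem_union_inv (Or.inl hs))
    exact ⟨(v.1 * k, f), mul_mem hv hk, hf⟩

variable (hS : (1 : G) ∉ S)
include hS

theorem comap_layerMap_adj_layerShift_self [IsMulCommutative K]
    (ha : ∀ k ∈ K, a * k = k⁻¹ * a) {t : K} (ht : (t : G) ∈ S ∪ S⁻¹) (v : K × Bool) :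
    ((cayleyGraph S).comap (layerMap K a)).Adj v (layerShift t v) := by
  obtain ⟨x, f⟩ := v
  simp only [SimpleGraph.comap_adj, layerMap_layerShift]
  cases f
  · rw [show (t : G) * layerMap K a (x, false) = layerMap K a (x, false) * t by
      simp [layerMap, setLike_mul_comm t.2 x.2]]
    exact cayleyGraph_adj_mul_right hS ht _
  · rw [show (t : G) * layerMap K a (x, true) = layerMap K a (x, true) * (t : G)⁻¹ by
      simp only [layerMap, cond_true]
      rw [mul_assoc, ha _ (inv_mem t.2), inv_inv, ← mul_assoc, ← mul_assoc,
        setLike_mul_comm t.2 x.2]]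
    exact cayleyGraph_adj_mul_right hS (Set.inv_mem_union_inv ht) _

theorem comap_layerMap_adj_false_true [IsMulCommutative K] {w : K}
    (hw : (w : G) * a ∈ S ∪ S⁻¹) (x : K) :
    ((cayleyGraph S).comap (layerMap K a)).Adj (x, false) (w * x, true) := by
  simp only [SimpleGraph.comap_adj]
  rw [show layerMap K a (w * x, true) = layerMap K a (x, false) * ((w : G) * a) by
    simp [layerMap, ← mul_assoc, setLike_mul_comm w.2 x.2]]
  exact cayleyGraph_adj_mul_right hS hw _

theorem comap_layerMap_adj_one_true_one_false (haS : a ∈ S ∪ S⁻¹) :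
    ((cayleyGraph S).comap (layerMap K a)).Adj (1, true) (1, false) := by
  simp only [SimpleGraph.comap_adj]
  rw [show layerMap K a (1, false) = layerMap K a (1, true) * a⁻¹ by simp [layerMap]]
  exact cayleyGraph_adj_mul_right hS (Set.inv_mem_union_inv haS) _

end LayerMap

open scoped IsMulCommutative in
theorem exists_isHamiltonianListOn_univ {G : Type*} [Group G] [Finite G] {S : Set G}
    {K : Subgroup G} [IsMulCommutative K] {a : G} (hK : K.index = 2) (hS : (1 : G) ∉ S)
    (hSgen : Subgroup.closure S = ⊤) (haS : a ∈ S ∪ S⁻¹) (haK : a ∉ K)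
    (ha : ∀ k ∈ K, a * k = k⁻¹ * a) :
    ∃ l, (cayleyGraph S).IsHamiltonianListOn l Set.univ := by
  obtain ⟨l, hl⟩ := exists_isHamiltonianListOn_closure_sup_closure
    (Γ := (cayleyGraph S).comap (layerMap K a))
    (fun c v w h => by simpa [layerMap_layerShift, cayleyGraph_adj_mul_left] using h)
    {t : K | (t : G) ∈ S ∪ S⁻¹} {w : K | (w : G) * a ∈ S ∪ S⁻¹}
    (fun _ ht => comap_layerMap_adj_layerShift_self hS ha ht)
    (fun _ hw => comap_layerMap_adj_false_true hS hw)
    (comap_layerMap_adj_one_true_one_false hS haS)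
  refine ⟨l.map (layerMap K a), ?_⟩
  convert hl.map (Γ' := cayleyGraph S) (f := layerMap K a) (fun _ _ h => h)
    (layerMap_injective haK)
  exact (Set.eq_univ_of_forall fun g => exists_layerMap_eq hK haK ha hSgen g).symm

theorem finite_gqd_hamiltonian_path {G : Type*} [Group G] [Finite G] [DecidableEq G]
    (K : Subgroup G) (b : G) (hGQD : IsGQD K b)
    (S : Set G) (hS1 : (1 : G) ∉ S) (hSgen : Subgroup.closure S = ⊤) :
    ∃ (u v : G) (p : (cayleyGraph S).Walk u v), p.IsHamiltonian := by
  have hK : K.index = 2 := hGQD.2.1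
  have : IsMulCommutative K := .of_setLike_mul_comm hGQD.1
  obtain ⟨a, haS, haK⟩ : ∃ a ∈ S, a ∉ K := by
    by_contra! hSK
    have hKtop : K = ⊤ := top_le_iff.mp (hSgen ▸ (Subgroup.closure_le K).mpr hSK)
    simp [hKtop] at hK
  obtain ⟨l, hl⟩ := exists_isHamiltonianListOn_univ hK hS1 hSgen (Or.inl haS) haK
    fun _ => hGQD.mul_eq_inv_mul haK
  exact hl.exists_walk_isHamiltonian
end

section
/- Let A and B be groups with a common finite subgroup K of index 2 in each, let G = A ∗_K B be the amalgamated free product, choose b ∈ A ∖ K and b' ∈ B ∖ K, and set a = b·b' (computed in G). Then an element g ∈ G has finite order if and only if g lies in (the image of) K or g does not lie in the subgroup K⟨a⟩ of G generated by K and a. Equivalently: every element of G outside K⟨a⟩ has finite order, and an element k·aⁿ of K⟨a⟩ (k ∈ K, n ∈ ℤ) has finite order exactly when n = 0. -/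
/-!
Index two makes `K` normal in both factors, hence in `G`, and `G ⧸ K` is generated by the images
of `b` and `b'`, which are involutions. In a group generated by two involutions `s, t`, every
element outside `⟨s t⟩` is an involution; so every `g ∉ K⟨a⟩` has `g² ∈ K`, a finite group.
Conversely, sending the nontrivial cosets of the two factors to the reflections `sr 0` and `sr 1`
of the infinite dihedral group maps `k aⁿ` to the rotation `r n`, of infinite order unless `n = 0`.
-/

open Monoid

namespace Subgroup

variable {A M : Type*} [Group A] {H : Subgroup A}

noncomputable def indexTwoHom [Monoid M] (hH : H.index = 2) (e : M) (he : e * e = 1) :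
    A →* M where
  toFun x := by classical exact if x ∈ H then 1 else e
  map_one' := if_pos H.one_mem
  map_mul' x y := by
    classical
    simp only [mul_mem_iff_of_index_two hH]
    by_cases hx : x ∈ H <;> by_cases hy : y ∈ H <;> simp [hx, hy, he]

theorem indexTwoHom_apply_of_mem [Monoid M] (hH : H.index = 2) {e : M} (he : e * e = 1)
    {x : A} (hx : x ∈ H) : indexTwoHom hH e he x = 1 := by
  simp [indexTwoHom, hx]

theorem indexTwoHom_apply_of_notMem [Monoid M] (hH : H.index = 2) {e : M} (he : e * e = 1)
    {x : A} (hx : x ∉ H) : indexTwoHom hH e he x = e := by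
  simp [indexTwoHom, hx]

theorem eq_one_or_eq_of_index_eq_two [Group M] (hH : H.index = 2) {f : A →* M} (hf : H ≤ f.ker)
    {c : A} (hc : c ∉ H) (x : A) : f x = 1 ∨ f x = f c := by
  by_cases hx : x ∈ H
  · exact Or.inl (hf hx)
  · have hxc : x * c⁻¹ ∈ H := by
      rw [mul_mem_iff_of_index_two hH, inv_mem_iff]
      tauto
    exact Or.inr (by simpa [mul_inv_eq_one] using hf hxc)

end Subgroup

theorem IsOfFinOrder.of_zpow {G : Type*} [Group G] {x : G} {n : ℤ} (h : IsOfFinOrder (x ^ n))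
    (hn : n ≠ 0) : IsOfFinOrder x := by
  obtain ⟨m, rfl | rfl⟩ := Int.eq_nat_or_neg n <;>
    simp only [zpow_neg, zpow_natCast, isOfFinOrder_inv_iff] at h <;>
    exact h.of_pow (by omega)

section TwoInvolutions

variable {Q : Type*} [Group Q] {s t : Q}

theorem mul_zpow_eq_zpow_neg_mul (hs : s * s = 1) (ht : t * t = 1) (n : ℤ) :
    s * (s * t) ^ n = (s * t) ^ (-n) * s := by
  have hs' : s⁻¹ = s := inv_eq_of_mul_eq_one_right hs
  have ht' : t⁻¹ = t := inv_eq_of_mul_eq_one_right ht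
  have : s * (s * t) * s⁻¹ = (s * t)⁻¹ := by
    rw [mul_inv_rev, hs', ht', ← mul_assoc, hs, one_mul]
  rw [← inv_mul_cancel_right (s * (s * t) ^ n) s, ← conj_zpow, this, inv_zpow, zpow_neg]

theorem exists_zpow_or_zpow_mul_of_mem_closure_pair (hs : s * s = 1) (ht : t * t = 1) {x : Q}
    (hx : x ∈ Subgroup.closure {s, t}) : ∃ m : ℤ, x = (s * t) ^ m ∨ x = (s * t) ^ m * s := by
  induction hx using Subgroup.closure_induction with
  | mem x hx =>
    rcases hx with rfl | rfl
    · exact ⟨0, Or.inr (by simp)⟩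
    · refine ⟨-1, Or.inr ?_⟩
      rw [zpow_neg_one, mul_inv_rev, inv_mul_cancel_right, inv_eq_of_mul_eq_one_right ht]
  | one => exact ⟨0, Or.inl (by simp)⟩
  | mul x y _ _ ihx ihy =>
    obtain ⟨m, rfl | rfl⟩ := ihx <;> obtain ⟨n, rfl | rfl⟩ := ihy
    · exact ⟨m + n, Or.inl (by rw [zpow_add])⟩
    · exact ⟨m + n, Or.inr (by rw [zpow_add, mul_assoc])⟩
    · refine ⟨m - n, Or.inr ?_⟩
      rw [mul_assoc, mul_zpow_eq_zpow_neg_mul hs ht, ← mul_assoc, ← zpow_add, sub_eq_add_neg]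
    · refine ⟨m - n, Or.inl ?_⟩
      rw [mul_assoc, ← mul_assoc s, mul_zpow_eq_zpow_neg_mul hs ht, mul_assoc, hs, mul_one,
        ← zpow_add, sub_eq_add_neg]
  | inv x _ ih =>
    obtain ⟨m, rfl | rfl⟩ := ih
    · exact ⟨-m, Or.inl (zpow_neg _ _).symm⟩
    · refine ⟨m, Or.inr ?_⟩
      rw [mul_inv_rev, inv_eq_of_mul_eq_one_right hs, ← zpow_neg, mul_zpow_eq_zpow_neg_mul hs ht,
        neg_neg]

theorem mul_self_eq_one_of_mem_closure_pair_of_notMem_zpowers (hs : s * s = 1) (ht : t * t = 1)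
    {x : Q} (hx : x ∈ Subgroup.closure {s, t}) (hx' : x ∉ Subgroup.zpowers (s * t)) :
    x * x = 1 := by
  obtain ⟨m, rfl | rfl⟩ := exists_zpow_or_zpow_mul_of_mem_closure_pair hs ht hx
  · exact absurd (Subgroup.zpow_mem_zpowers _ m) hx'
  · rw [mul_assoc, ← mul_assoc s, mul_zpow_eq_zpow_neg_mul hs ht, mul_assoc, hs, mul_one,
      ← zpow_add, add_neg_cancel, zpow_zero]

end TwoInvolutions

namespace Monoid.PushoutI

section Normal

variable {ι K : Type*} {G : ι → Type*} [Group K] [∀ i, Group (G i)] {φ : ∀ i, K →* G i}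

theorem normal_range_base (hφ : ∀ i, (φ i).range.Normal) : (base φ).range.Normal where
  conj_mem := by
    rintro _ ⟨k, rfl⟩ g
    induction g using induction_on generalizing k with
    | of i x =>
      obtain ⟨k', hk'⟩ := (hφ i).conj_mem _ ⟨k, rfl⟩ x
      exact ⟨k', by rw [← of_apply_eq_base φ i, hk', map_mul, map_mul, map_inv, of_apply_eq_base]⟩
    | base k' => exact ⟨k' * k * k'⁻¹, by simp⟩
    | mul x y ihx ihy =>
      obtain ⟨k', hk'⟩ := ihy k
      obtain ⟨k'', hk''⟩ := ihx k'
      exact ⟨k'', by rw [hk'', hk']; group⟩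

variable [(base φ).range.Normal]

local notation "π" => QuotientGroup.mk' (MonoidHom.range (base φ))

theorem mk_of_eq_one_or_eq {i : ι} (hi : (φ i).range.index = 2) {c : G i}
    (hc : c ∉ (φ i).range) (x : G i) : π (of i x) = 1 ∨ π (of i x) = π (of i c) :=
  Subgroup.eq_one_or_eq_of_index_eq_two (f := (π).comp (of i)) hi
    (by rintro _ ⟨k, rfl⟩; simp [of_apply_eq_base]) hc x

theorem mk_of_mul_self {i : ι} (hi : (φ i).range.index = 2) (x : G i) :
    π (of i x) * π (of i x) = 1 := by
  obtain ⟨k, hk⟩ := Subgroup.mul_self_mem_of_index_two hi x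
  rw [← map_mul, ← map_mul, ← hk, of_apply_eq_base, QuotientGroup.mk'_apply,
    QuotientGroup.eq_one_iff]
  exact ⟨k, rfl⟩

end Normal

section TwoFactors

variable {K : Type*} [Group K] {G : Bool → Type*} [∀ i, Group (G i)] {φ : ∀ i, K →* G i}

local notation "π" => QuotientGroup.mk' (MonoidHom.range (base φ))

theorem mk_mem_closure_pair [(base φ).range.Normal] (hidx : ∀ i, (φ i).range.index = 2)
    {b : G true} (hb : b ∉ (φ true).range) {b' : G false} (hb' : b' ∉ (φ false).range)
    (g : PushoutI φ) : π g ∈ Subgroup.closure {π (of true b), π (of false b')} := by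
  induction g using induction_on with
  | of i x =>
    cases i with
    | false =>
      rcases mk_of_eq_one_or_eq (hidx false) hb' x with h | h <;> rw [h]
      exacts [one_mem _, Subgroup.subset_closure (by simp)]
    | true =>
      rcases mk_of_eq_one_or_eq (hidx true) hb x with h | h <;> rw [h]
      exacts [one_mem _, Subgroup.subset_closure (by simp)]
  | base k =>
    rw [show π (base φ k) = 1 from (QuotientGroup.eq_one_iff _).2 ⟨k, rfl⟩]
    exact one_mem _
  | mul x y hx hy => exact map_mul π x y ▸ mul_mem hx hy

theorem mul_self_mem_range_base_of_notMem_sup (hidx : ∀ i, (φ i).range.index = 2)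
    {b : G true} (hb : b ∉ (φ true).range) {b' : G false} (hb' : b' ∉ (φ false).range)
    {g : PushoutI φ} (hg : g ∉ (base φ).range ⊔ Subgroup.zpowers (of true b * of false b')) :
    g * g ∈ (base φ).range := by
  have := normal_range_base fun i => Subgroup.normal_of_index_eq_two (hidx i)
  have hq : π g ∉ Subgroup.zpowers (π (of true b) * π (of false b')) := by
    rwa [← map_mul, ← MonoidHom.map_zpowers, ← Subgroup.mem_comap, Subgroup.comap_map_eq,
      QuotientGroup.ker_mk', sup_comm]
  have := mul_self_eq_one_of_mem_closure_pair_of_notMem_zpowers (mk_of_mul_self (hidx true) b)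
    (mk_of_mul_self (hidx false) b') (mk_mem_closure_pair hidx hb hb' g) hq
  rwa [← map_mul, QuotientGroup.mk'_apply, QuotientGroup.eq_one_iff] at this

noncomputable def toInfiniteDihedral (hidx : ∀ i, (φ i).range.index = 2) :
    PushoutI φ →* DihedralGroup 0 :=
  lift (fun i => Subgroup.indexTwoHom (hidx i) (DihedralGroup.sr (if i then 0 else 1))
    (DihedralGroup.sr_mul_self _)) 1
    fun i => by
      ext k
      exact Subgroup.indexTwoHom_apply_of_mem (hidx i) (DihedralGroup.sr_mul_self _) ⟨k, rfl⟩

@[simp]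
theorem toInfiniteDihedral_base (hidx : ∀ i, (φ i).range.index = 2) (k : K) :
    toInfiniteDihedral hidx (base φ k) = 1 := by
  simp [toInfiniteDihedral]

theorem toInfiniteDihedral_of_mul_of (hidx : ∀ i, (φ i).range.index = 2)
    {b : G true} (hb : b ∉ (φ true).range) {b' : G false} (hb' : b' ∉ (φ false).range) :
    toInfiniteDihedral hidx (of true b * of false b') = DihedralGroup.r 1 := by
  simp [toInfiniteDihedral, Subgroup.indexTwoHom_apply_of_notMem _ _ hb,
    Subgroup.indexTwoHom_apply_of_notMem _ _ hb', DihedralGroup.sr_mul_sr]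

theorem not_isOfFinOrder_base_mul_zpow (hidx : ∀ i, (φ i).range.index = 2)
    {b : G true} (hb : b ∉ (φ true).range) {b' : G false} (hb' : b' ∉ (φ false).range)
    (k : K) {n : ℤ} (hn : n ≠ 0) : ¬IsOfFinOrder (base φ k * (of true b * of false b') ^ n) := by
  intro h
  have h' := (toInfiniteDihedral hidx).isOfFinOrder h
  rw [map_mul, map_zpow, toInfiniteDihedral_base, one_mul,
    toInfiniteDihedral_of_mul_of hidx hb hb'] at h'
  exact orderOf_eq_zero_iff.1 DihedralGroup.orderOf_r_one (h'.of_zpow hn)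

end TwoFactors

end Monoid.PushoutI

theorem amalgam_torsion_characterization_general {K : Type*} [Group K] [Finite K]
    {G : Bool → Type*} [∀ i, Group (G i)] (φ : ∀ i, K →* G i)
    (hidx : ∀ i, (φ i).range.index = 2)
    (b : G true) (hb : b ∉ (φ true).range)
    (b' : G false) (hb' : b' ∉ (φ false).range)
    (a : PushoutI φ)
    (ha : a = PushoutI.of (φ := φ) true b * PushoutI.of (φ := φ) false b') :
    (∀ g : PushoutI φ,
      IsOfFinOrder g ↔
        (g ∈ (PushoutI.base φ : K →* PushoutI φ).range ∨
          g ∉ (PushoutI.base φ : K →* PushoutI φ).range ⊔ Subgroup.zpowers a)) ∧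
    (∀ (k : K) (n : ℤ), IsOfFinOrder (PushoutI.base φ k * a ^ n) ↔ n = 0) := by
  subst ha
  have hbase (k : K) : IsOfFinOrder (PushoutI.base φ k) :=
    (PushoutI.base φ).isOfFinOrder (isOfFinOrder_of_finite k)
  have hpow (k : K) (n : ℤ) :
      IsOfFinOrder (PushoutI.base φ k * (PushoutI.of true b * PushoutI.of false b') ^ n) ↔
        n = 0 :=
    ⟨fun h => Classical.byContradiction fun hn =>
      PushoutI.not_isOfFinOrder_base_mul_zpow hidx hb hb' k hn h,
      fun hn => by simpa [hn] using hbase k⟩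
  have := PushoutI.normal_range_base fun i => Subgroup.normal_of_index_eq_two (hidx i)
  refine ⟨fun g => ⟨fun hg => or_iff_not_imp_right.2 fun hmem => ?_, ?_⟩, hpow⟩
  · obtain ⟨_, ⟨k, rfl⟩, _, ⟨n, rfl⟩, rfl⟩ := Subgroup.mem_sup_of_normal_left.1 (not_not.1 hmem)
    exact ⟨k, by simp [(hpow k n).1 hg]⟩
  · rintro (⟨k, rfl⟩ | hg)
    · exact hbase k
    · obtain ⟨k, hk⟩ := PushoutI.mul_self_mem_range_base_of_notMem_sup hidx hb hb' hg
      exact (pow_two g ▸ hk ▸ hbase k).of_pow two_ne_zero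

/-- In the amalgamated free product `G = A ∗_K B` of groups over a common finite
subgroup `K` of index 2 in each factor, with `b ∈ A ∖ K`, `b' ∈ B ∖ K` and `a = b·b'`,
an element of `G` has finite order iff it lies in (the image of) `K` or outside the
subgroup `K⟨a⟩` generated by `K` and `a`.  Moreover `k·aⁿ` has finite order iff `n = 0`. -/
theorem amalgam_torsion_characterization {K : Type*} [Group K] [Finite K]
    {G : Bool → Type*} [∀ i, Group (G i)] (φ : ∀ i, K →* G i)
    (hinj : ∀ i, Function.Injective (φ i))
    (hidx : ∀ i, (φ i).range.index = 2)
    (b : G true) (hb : b ∉ (φ true).range)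
    (b' : G false) (hb' : b' ∉ (φ false).range)
    (a : PushoutI φ)
    (ha : a = PushoutI.of (φ := φ) true b * PushoutI.of (φ := φ) false b') :
    (∀ g : PushoutI φ,
      IsOfFinOrder g ↔
        (g ∈ (PushoutI.base φ : K →* PushoutI φ).range ∨
          g ∉ (PushoutI.base φ : K →* PushoutI φ).range ⊔ Subgroup.zpowers a)) ∧
    (∀ (k : K) (n : ℤ), IsOfFinOrder (PushoutI.base φ k * a ^ n) ↔ n = 0) :=
  amalgam_torsion_characterization_general φ hidx b hb b' hb' a ha
end

section
/- Let A and B be groups with a common finite subgroup K of index 2 in each, and let G = A ∗_K B be the amalgamated free product, so that G is two-ended. If G is generalized quasi-dihedral on some abelian subgroup H and some element b, then A and B are generalized quasi-dihedral on K; that is, K is abelian, and there exist elements x ∈ A ∖ K and y ∈ B ∖ K of finite order such that x·k·x⁻¹ = k⁻¹ and y·k·y⁻¹ = k⁻¹ for all k ∈ K. -/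
open Monoid

open Classical in
/-- Kill an index-two subgroup, send everything else to a fixed involution. -/
noncomputable def idxTwoHom {A : Type*} [Group A] (R : Subgroup A) (hR : R.index = 2)
    {Q : Type*} [Group Q] (e : Q) (he : e * e = 1) : A →* Q :=
  MonoidHom.mk' (fun x => if x ∈ R then 1 else e) (by
    intro a b
    by_cases ha : a ∈ R <;> by_cases hb : b ∈ R <;>
      simp [Subgroup.mul_mem_iff_of_index_two hR, ha, hb, he])

lemma idxTwoHom_apply_of_mem {A : Type*} [Group A] {R : Subgroup A} (hR : R.index = 2)
    {Q : Type*} [Group Q] {e : Q} (he : e * e = 1) {x : A} (hx : x ∈ R) :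
    idxTwoHom R hR e he x = 1 := by
  simp [idxTwoHom, hx]

lemma idxTwoHom_apply_of_not_mem {A : Type*} [Group A] {R : Subgroup A} (hR : R.index = 2)
    {Q : Type*} [Group Q] {e : Q} (he : e * e = 1) {x : A} (hx : x ∉ R) :
    idxTwoHom R hR e he x = e := by
  simp [idxTwoHom, hx]

/-- If the amalgamated free product `G = A ∗_K B` (over a common finite subgroup `K`
of index 2 in each factor) is generalized quasi-dihedral on some abelian subgroup `H`
and element `b₀`, then both factors `A` and `B` are generalized quasi-dihedral on `K`:
`K` is abelian and each factor has a finite-order element outside `K` inverting `K`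
by conjugation. -/
theorem amalgam_factors_gqd {K : Type*} [Group K] [Finite K]
    {G : Bool → Type*} [∀ i, Group (G i)] (φ : ∀ i, K →* G i)
    (hinj : ∀ i, Function.Injective (φ i))
    (hidx : ∀ i, (φ i).range.index = 2)
    (H : Subgroup (PushoutI φ)) (b₀ : PushoutI φ) (hGQD : IsGQD H b₀) :
    (∀ x y : K, x * y = y * x) ∧
    (∀ i : Bool, ∃ x : G i, x ∉ (φ i).range ∧ IsOfFinOrder x ∧
      ∀ k : K, x * φ i k * x⁻¹ = (φ i k)⁻¹) := by
  classical
  obtain ⟨hHab, hHidx, hb₀H, hb₀fin, hb₀conj⟩ := hGQD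
  -- two involutions of ℤ generating an infinite dihedral group
  set σ : Equiv.Perm ℤ := Equiv.neg ℤ with hσ
  set τ : Equiv.Perm ℤ := (Equiv.neg ℤ).trans (Equiv.addLeft 1) with hτ
  have hσ2 : σ * σ = 1 := by
    ext x; simp [hσ, Equiv.Perm.mul_apply]
  have hτ2 : τ * τ = 1 := by
    ext x; simp [hτ, Equiv.Perm.mul_apply]
  set e : Bool → Equiv.Perm ℤ := fun i => if i then τ else σ with he_def
  have he : ∀ i, e i * e i = 1 := by
    intro i; cases i <;> simp [he_def, hσ2, hτ2]
  set f : ∀ i, G i →* Equiv.Perm ℤ :=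
    fun i => idxTwoHom (φ i).range (hidx i) (e i) (he i) with hf_def
  have hf : ∀ i, (f i).comp (φ i) = (1 : K →* Equiv.Perm ℤ) := by
    intro i
    refine MonoidHom.ext fun k => ?_
    simp only [MonoidHom.comp_apply, MonoidHom.one_apply, hf_def]
    exact idxTwoHom_apply_of_mem (hidx i) (he i) ⟨k, rfl⟩
  set ψ : PushoutI φ →* Equiv.Perm ℤ := PushoutI.lift f 1 hf with hψ
  -- the translation σ * τ has infinite order
  have hst : ∀ (n : ℕ) (x : ℤ), ((σ * τ) ^ n) x = x - n := by
    intro n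
    induction n with
    | zero => intro x; simp
    | succ n ih =>
      intro x
      have : (σ * τ) ^ (n + 1) = (σ * τ) ^ n * (σ * τ) := pow_succ _ _
      rw [this, Equiv.Perm.mul_apply, Equiv.Perm.mul_apply, ih]
      simp [hσ, hτ]
      ring
  have hstinf : ¬ IsOfFinOrder (σ * τ) := by
    intro hfin
    obtain ⟨n, hn, h1⟩ := (isOfFinOrder_iff_pow_eq_one).1 hfin
    have := hst n 0
    rw [h1] at this
    simp at this
    omega
  -- words of the form (of false x) * (of true y) with x, y outside the ranges have
  -- infinite order
  have nofin : ∀ (x : G false), x ∉ (φ false).range → ∀ (y : G true), y ∉ (φ true).range →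
      ¬ IsOfFinOrder (PushoutI.of (φ := φ) false x * PushoutI.of (φ := φ) true y) := by
    intro x hx y hy hfin
    have h1 : ψ (PushoutI.of (φ := φ) false x * PushoutI.of (φ := φ) true y) = σ * τ := by
      rw [map_mul, hψ, PushoutI.lift_of, PushoutI.lift_of, hf_def]
      rw [idxTwoHom_apply_of_not_mem (hidx false) (he false) hx,
        idxTwoHom_apply_of_not_mem (hidx true) (he true) hy]
      simp [he_def]
    exact hstinf (h1 ▸ ψ.isOfFinOrder hfin)
  -- basic index-two facts about H
  have hb₀inv : b₀⁻¹ ∉ H := fun h => hb₀H ((Subgroup.inv_mem_iff H).1 h)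
  have hb2 : b₀ * b₀ ∈ H := (Subgroup.mul_mem_iff_of_index_two hHidx).2 Iff.rfl
  -- every element outside H inverts H by conjugation and squares to b₀²
  have hout : ∀ g : PushoutI φ, g ∉ H →
      (∀ h ∈ H, g * h * g⁻¹ = h⁻¹) ∧ g * g = b₀ * b₀ := by
    intro g hg
    have h₀mem : b₀⁻¹ * g ∈ H :=
      (Subgroup.mul_mem_iff_of_index_two hHidx).2 (iff_of_false hb₀inv hg)
    set h₀ := b₀⁻¹ * g with hh₀
    have hg' : g = b₀ * h₀ := by rw [hh₀]; group
    constructor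
    · intro h hh
      have hcomm : h₀ * h = h * h₀ := hHab h₀ h₀mem h hh
      calc g * h * g⁻¹ = b₀ * (h₀ * h * h₀⁻¹) * b₀⁻¹ := by rw [hg']; group
        _ = b₀ * h * b₀⁻¹ := by rw [hcomm]; group
        _ = h⁻¹ := hb₀conj h hh
    · have hc : b₀ * h₀ * b₀⁻¹ = h₀⁻¹ := hb₀conj h₀ h₀mem
      have hc' : b₀ * h₀ = h₀⁻¹ * b₀ := by
        rw [← hc]; group
      have hc1 : b₀ * h₀⁻¹ * b₀⁻¹ = h₀ := by
        have := congrArg Inv.inv hc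
        simpa [mul_inv_rev, mul_assoc] using this
      have hc2 : b₀ * h₀⁻¹ = h₀ * b₀ := mul_inv_eq_iff_eq_mul.mp hc1
      calc g * g = (b₀ * h₀) * (b₀ * h₀) := by rw [hg']
        _ = (h₀⁻¹ * b₀) * (h₀⁻¹ * b₀) := by rw [hc']
        _ = h₀⁻¹ * (b₀ * h₀⁻¹) * b₀ := by group
        _ = h₀⁻¹ * (h₀ * b₀) * b₀ := by rw [hc2]
        _ = b₀ * b₀ := by group
  -- hence every element outside H has finite order
  have hfin_out : ∀ g : PushoutI φ, g ∉ H → IsOfFinOrder g := by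
    intro g hg
    have h2 : g ^ 2 = b₀ ^ 2 := by
      rw [pow_two, pow_two]; exact (hout g hg).2
    have : IsOfFinOrder (g ^ 2) := h2 ▸ hb₀fin.pow
    exact this.of_pow two_ne_zero
  have hmem_of_nofin : ∀ g : PushoutI φ, ¬ IsOfFinOrder g → g ∈ H := by
    intro g hg
    by_contra h
    exact hg (hfin_out g h)
  -- pick elements outside the ranges
  have hex : ∀ i, ∃ x : G i, x ∉ (φ i).range := by
    intro i
    by_contra h
    push_neg at h
    have : (φ i).range = ⊤ := by
      ext x; simp [h x]
    have h1 := hidx i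
    rw [this, Subgroup.index_top] at h1
    omega
  obtain ⟨a, ha⟩ := hex false
  obtain ⟨b, hb⟩ := hex true
  set z : PushoutI φ := PushoutI.of (φ := φ) false a * PushoutI.of (φ := φ) true b with hz_def
  have hz : z ∈ H := hmem_of_nofin z (nofin a ha b hb)
  -- the base K sits inside H
  have hbase : ∀ k : K, PushoutI.base φ k ∈ H := by
    intro k
    have hbk : b * φ true k ∉ (φ true).range := by
      rintro ⟨m, hm⟩
      exact hb ⟨m * k⁻¹, by rw [map_mul, hm, map_inv]; group⟩
    have h2 : PushoutI.of (φ := φ) false a * PushoutI.of (φ := φ) true (b * φ true k) ∈ H :=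
      hmem_of_nofin _ (nofin a ha _ hbk)
    have h3 : z * PushoutI.base φ k =
        PushoutI.of (φ := φ) false a * PushoutI.of (φ := φ) true (b * φ true k) := by
      rw [hz_def, map_mul, PushoutI.of_apply_eq_base, mul_assoc]
    have h4 : z * PushoutI.base φ k ∈ H := h3 ▸ h2
    have := mul_mem (Subgroup.inv_mem H hz) h4
    rwa [← mul_assoc, inv_mul_cancel, one_mul] at this
  -- K is abelian
  have Kcomm : ∀ x y : K, x * y = y * x := by
    intro x y
    apply PushoutI.base_injective hinj
    rw [map_mul, map_mul]
    exact hHab _ (hbase x) _ (hbase y)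
  -- both a and b map outside H
  have hiff : (PushoutI.of (φ := φ) false a ∈ H) ↔ (PushoutI.of (φ := φ) true b ∈ H) :=
    (Subgroup.mul_mem_iff_of_index_two hHidx).1 hz
  have haH : PushoutI.of (φ := φ) false a ∉ H := by
    intro haH
    have hbH : PushoutI.of (φ := φ) true b ∈ H := hiff.1 haH
    have htop : ∀ g : PushoutI φ, g ∈ H := by
      intro g
      induction g using PushoutI.induction_on with
      | of i x =>
        by_cases hx : x ∈ (φ i).range
        · obtain ⟨k, rfl⟩ := hx
          rw [PushoutI.of_apply_eq_base]
          exact hbase k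
        · match i with
          | false =>
            have hax : a⁻¹ * x ∈ (φ false).range :=
              (Subgroup.mul_mem_iff_of_index_two (hidx false)).2
                (iff_of_false (fun h => ha ((Subgroup.inv_mem_iff _).1 h)) hx)
            obtain ⟨k, hk⟩ := hax
            have hxe : x = a * φ false k := by rw [hk]; group
            rw [hxe, map_mul, PushoutI.of_apply_eq_base]
            exact mul_mem haH (hbase k)
          | true =>
            have hbx : b⁻¹ * x ∈ (φ true).range :=
              (Subgroup.mul_mem_iff_of_index_two (hidx true)).2
                (iff_of_false (fun h => hb ((Subgroup.inv_mem_iff _).1 h)) hx)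
            obtain ⟨k, hk⟩ := hbx
            have hxe : x = b * φ true k := by rw [hk]; group
            rw [hxe, map_mul, PushoutI.of_apply_eq_base]
            exact mul_mem hbH (hbase k)
      | base h => exact hbase h
      | mul x y hx hy => exact mul_mem hx hy
    have hHtop : H = ⊤ := by
      ext g; simp [htop g]
    rw [hHtop, Subgroup.index_top] at hHidx
    omega
  have hbH : PushoutI.of (φ := φ) true b ∉ H := fun h => haH (hiff.2 h)
  -- conclude for each factor
  have main : ∀ (i : Bool) (x : G i), x ∉ (φ i).range → PushoutI.of (φ := φ) i x ∉ H →
      x ∉ (φ i).range ∧ IsOfFinOrder x ∧ ∀ k : K, x * φ i k * x⁻¹ = (φ i k)⁻¹ := by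
    intro i x hx hxH
    refine ⟨hx, ?_, ?_⟩
    · have h2 : (PushoutI.of (φ := φ) i x) ^ 2 = b₀ ^ 2 := by
        rw [pow_two, pow_two]; exact (hout _ hxH).2
      have hfo : IsOfFinOrder (PushoutI.of (φ := φ) i x) :=
        (h2 ▸ (hb₀fin.pow : IsOfFinOrder (b₀ ^ 2))).of_pow two_ne_zero
      exact (Function.Injective.isOfFinOrder_iff (PushoutI.of_injective hinj i)).1 hfo
    · intro k
      apply PushoutI.of_injective hinj i
      rw [map_mul, map_mul, map_inv, map_inv, PushoutI.of_apply_eq_base]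
      exact (hout _ hxH).1 _ (hbase k)
  refine ⟨Kcomm, ?_⟩
  intro i
  match i with
  | false => exact ⟨a, main false a ha haH⟩
  | true => exact ⟨b, main true b hb hbH⟩
end

section
/- Let G be a group that is generalized quasi-dihedral on an abelian subgroup K and an element b, and let H be a subgroup of G. Then H is either abelian or generalized quasi-dihedral; more precisely, if H is not contained in K, then H ∩ K has index 2 in H and there exists an element x ∈ H ∖ K of finite order such that x·k·x⁻¹ = k⁻¹ for every k ∈ H ∩ K, so H is generalized quasi-dihedral on H ∩ K and x. -/
namespace Subgroup

variable {G : Type*} [Group G] {K : Subgroup G}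

theorem relIndex_eq_two_of_index_eq_two (hK : K.index = 2) {H : Subgroup G} (hHK : ¬ H ≤ K) :
    K.relIndex H = 2 := by
  obtain ⟨x, hxH, hxK⟩ := SetLike.not_le_iff_exists.mp hHK
  refine relIndex_eq_two_iff_exists_notMem_and.mpr ⟨x, hxH, hxK, fun y _ => ?_⟩
  rw [mul_mem_iff_of_index_two hK]
  tauto

theorem conj_eq_of_inv_mul_mem (hK : ∀ x ∈ K, ∀ y ∈ K, x * y = y * x) {b x : G}
    (hbx : b⁻¹ * x ∈ K) {k : G} (hk : k ∈ K) : x * k * x⁻¹ = b * k * b⁻¹ :=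
  calc x * k * x⁻¹ = b * ((b⁻¹ * x) * k) * (b⁻¹ * x)⁻¹ * b⁻¹ := by group
    _ = b * k * b⁻¹ := by rw [hK _ hbx _ hk]; group

theorem pow_four_eq_one_of_conj_eq_inv (hK : K.index = 2) {x : G}
    (hx : ∀ k ∈ K, x * k * x⁻¹ = k⁻¹) : x ^ 4 = 1 := by
  have hsq : x ^ 2 = (x ^ 2)⁻¹ := by
    rw [← hx _ (sq_mem_of_index_two hK x)]
    group
  calc x ^ 4 = x ^ 2 * x ^ 2 := by group
    _ = 1 := by nth_rewrite 2 [hsq]; exact mul_inv_cancel _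

end Subgroup

/-- Every subgroup of a generalized quasi-dihedral group is abelian or generalized
quasi-dihedral: if `H ≤ K` then `H` is abelian, and otherwise `H ∩ K` has index 2
in `H` and some finite-order `x ∈ H ∖ K` inverts `H ∩ K` by conjugation, i.e. `H`
is generalized quasi-dihedral on `H ⊓ K` and `x`. -/
theorem gqd_subgroup_dichotomy {G : Type*} [Group G] (K : Subgroup G) (b : G)
    (hGQD : IsGQD K b) (H : Subgroup G) :
    (H ≤ K → ∀ x ∈ H, ∀ y ∈ H, x * y = y * x) ∧
    (¬ H ≤ K → K.relIndex H = 2 ∧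
      ∃ x : G, x ∈ H ∧ x ∉ K ∧ IsOfFinOrder x ∧
        ∀ k ∈ H ⊓ K, x * k * x⁻¹ = k⁻¹) := by
  obtain ⟨hcomm, hidx, hbK, -, hinv⟩ := hGQD
  refine ⟨fun hHK x hx y hy => hcomm x (hHK hx) y (hHK hy), fun hHK => ?_⟩
  obtain ⟨x, hxH, hxK⟩ := SetLike.not_le_iff_exists.mp hHK
  have hcoset : b⁻¹ * x ∈ K := by
    rw [Subgroup.mul_mem_iff_of_index_two hidx, inv_mem_iff]
    tauto
  have hx_inv : ∀ k ∈ K, x * k * x⁻¹ = k⁻¹ := fun k hk => by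
    rw [Subgroup.conj_eq_of_inv_mul_mem hcomm hcoset hk, hinv k hk]
  have hx_fin : IsOfFinOrder x := isOfFinOrder_iff_pow_eq_one.mpr
    ⟨4, by norm_num, Subgroup.pow_four_eq_one_of_conj_eq_inv hidx hx_inv⟩
  exact ⟨Subgroup.relIndex_eq_two_of_index_eq_two hidx hHK, x, hxH, hxK, hx_fin,
    fun k hk => hx_inv k hk.2⟩
end

section
/- For any k ≥ 2 and l ∈ ℕ with k + l even, the twisted cubic cylinder W̄_{k,l} is isomorphic (as a simple graph) to the twisted cubic cylinder W̄_{(k+l)/2, (3k−l)/2}. -/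
/-!
`W̄_{k,l}` is the quotient of the brick-wall picture of the hexagonal lattice on `ℤ × ℤ`
by the translation `(l, -k)`, which is a graph automorphism because `k + l` is even.
The map `(a, b) ↦ (⌊(-1 - a - 3b) / 2⌋, ⌊(b - a) / 2⌋)` is a reflection of the brick wall
whose linear part sends `(l, -k)` to `((3k - l) / 2, -(k + l) / 2)`; so it conjugates one
group of deck transformations into the other and descends to an isomorphism of the quotients.
-/

/-- One "direction" of the edges of the twisted cubic cylinder `W̄_{k,l}`:
horizontal edges, straight vertical edges and twisted edges. -/
def cylStep (k : ℕ) (l : ℤ) (p q : ℤ × ZMod k) : Prop :=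
  -- horizontal edges {(n,m),(n+1,m)}
  (q.1 = p.1 + 1 ∧ q.2 = p.2) ∨
  -- straight vertical edges
  (∃ (n : ℤ) (m : ℕ), m + 2 ≤ k ∧
    ((Even m ∧ p = (2 * n, (m : ZMod k)) ∧ q = (2 * n, ((m + 1 : ℕ) : ZMod k))) ∨
     (Odd m ∧ p = (2 * n + 1, (m : ZMod k)) ∧ q = (2 * n + 1, ((m + 1 : ℕ) : ZMod k))))) ∨
  -- twisted edges
  ((Even k ∧ ∃ n : ℤ, p = (2 * n + 1, ((k - 1 : ℕ) : ZMod k)) ∧ q = (2 * n + 1 + l, 0)) ∨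
   (Odd k ∧ ∃ n : ℤ, p = (2 * n, ((k - 1 : ℕ) : ZMod k)) ∧ q = (2 * n + l, 0)))

/-- The twisted cubic cylinder `W̄_{k,l}` of height `k` and twist `l`. -/
def twistedCylinder (k : ℕ) (l : ℤ) : SimpleGraph (ℤ × ZMod k) where
  Adj p q := p ≠ q ∧ (cylStep k l p q ∨ cylStep k l q p)
  symm := ⟨by rintro p q ⟨hne, h⟩; exact ⟨hne.symm, h.symm⟩⟩
  loopless := ⟨by rintro p ⟨hne, -⟩; exact hne rfl⟩

namespace SimpleGraph

variable {V V' W W' : Type*} {G : SimpleGraph V} {G' : SimpleGraph V'}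

theorem Iso.map_eq (φ : G ≃g G') : G.map φ = G' := by
  ext u v
  rw [← φ.apply_symm_apply u, ← φ.apply_symm_apply v]
  exact (Iso.map φ.toEquiv G).map_rel_iff.trans φ.map_rel_iff.symm

noncomputable def Iso.descend (φ : G ≃g G') {f : V → W} {f' : V' → W'}
    (hf : Function.Surjective f) (hf' : Function.Surjective f')
    (hφ : ∀ x y, f x = f y ↔ f' (φ x) = f' (φ y)) : G.map f ≃g G'.map f' :=
  let e : W ≃ W' := (Setoid.quotientKerEquivOfSurjective f hf).symm.trans
    ((Quotient.congr φ.toEquiv hφ).trans (Setoid.quotientKerEquivOfSurjective f' hf'))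
  have he : e ∘ f = f' ∘ φ := funext fun x => by
    have hx : (Setoid.quotientKerEquivOfSurjective f hf).symm (f x) = Quotient.mk _ x :=
      (Equiv.symm_apply_eq _).2 rfl
    simp only [e, Function.comp_apply, Equiv.trans_apply, hx]
    rfl
  { e with
    map_rel_iff' := by
      rw [← φ.map_eq, map_map, ← he, ← map_map]
      exact (Iso.map e _).map_rel_iff }

end SimpleGraph

def brickStep (x y : ℤ × ℤ) : Prop :=
  (y.1 = x.1 + 1 ∧ y.2 = x.2) ∨ (y.1 = x.1 ∧ y.2 = x.2 + 1 ∧ Even (x.1 + x.2))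

def brickWall : SimpleGraph (ℤ × ℤ) := SimpleGraph.fromRel brickStep

def cylPeriod (k : ℕ) (l : ℤ) : ℤ × ℤ := (l, -(k : ℤ))

/-- Wraps the plane onto `W̄_{k,l}`: the row is reduced mod `k`, and every full turn around the
cylinder shifts the column by `l`. -/
def cylProj (k : ℕ) (l : ℤ) (x : ℤ × ℤ) : ℤ × ZMod k :=
  (x.1 + l * (x.2 / k), (x.2 : ZMod k))

section Projection

variable {k : ℕ} {l : ℤ}

theorem brickStep.ne {x y : ℤ × ℤ} (h : brickStep x y) : x ≠ y := by
  rintro rfl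
  rcases h with ⟨h, -⟩ | ⟨-, h, -⟩ <;> omega

theorem brickStep.add_zsmul (hkl : Even ((k : ℤ) + l)) {x y : ℤ × ℤ} (h : brickStep x y)
    (t : ℤ) : brickStep (x + t • cylPeriod k l) (y + t • cylPeriod k l) := by
  have hpar : x.1 + t * l + (x.2 + t * -k) = x.1 + x.2 + (t * (k + l) - 2 * (t * k)) := by ring
  simp only [brickStep, Prod.fst_add, Prod.snd_add, Prod.smul_fst, Prod.smul_snd, smul_eq_mul,
    cylPeriod, hpar] at h ⊢
  rcases h with ⟨h1, h2⟩ | ⟨h1, h2, hx⟩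
  · exact Or.inl ⟨by omega, by omega⟩
  · exact Or.inr ⟨by omega, by omega, hx.add ((hkl.mul_left t).sub (even_two_mul _))⟩

theorem cylProj_add_zsmul (hk : 0 < k) (x : ℤ × ℤ) (t : ℤ) :
    cylProj k l (x + t • cylPeriod k l) = cylProj k l x := by
  have hdiv : (x.2 + t * -k) / k = x.2 / k - t := by
    rw [mul_neg, ← neg_mul, Int.add_mul_ediv_right _ _ (by omega)]
    ring
  simp only [cylProj, Prod.fst_add, Prod.snd_add, Prod.smul_fst, Prod.smul_snd, smul_eq_mul,
    cylPeriod, hdiv, Prod.mk.injEq]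
  refine ⟨by ring, by simp⟩

theorem cylProj_eq_cylProj_iff (hk : 0 < k) {x y : ℤ × ℤ} :
    cylProj k l x = cylProj k l y ↔ ∃ t : ℤ, y = x + t • cylPeriod k l := by
  refine ⟨fun h => ?_, fun ⟨t, ht⟩ => ht ▸ (cylProj_add_zsmul hk x t).symm⟩
  obtain ⟨t, ht⟩ : (k : ℤ) ∣ x.2 - y.2 :=
    (ZMod.intCast_eq_intCast_iff_dvd_sub _ _ _).1 (congrArg Prod.snd h).symm
  refine ⟨t, ?_⟩
  have h' := (cylProj_add_zsmul hk x t).trans h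
  have h2 : (x + t • cylPeriod k l).2 = y.2 := by
    simp only [cylPeriod, Prod.smul_mk, Int.zsmul_eq_mul, mul_neg, Prod.snd_add]
    linarith
  simp only [cylProj, h2, Prod.mk.injEq, add_left_inj] at h'
  exact Prod.ext h'.1.symm h2.symm

theorem cylProj_mk_natCast (a : ℤ) {m : ℕ} (hm : m < k) :
    cylProj k l (a, m) = (a, (m : ZMod k)) := by
  simp [cylProj, Int.ediv_eq_zero_of_lt (Int.natCast_nonneg m) (by omega : (m : ℤ) < k)]

theorem cylProj_mk_self (hk : 0 < k) (a : ℤ) : cylProj k l (a, k) = (a + l, 0) := by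
  simp [cylProj, Int.ediv_self (by omega : (k : ℤ) ≠ 0)]

theorem cylProj_surjective (hk : 0 < k) : Function.Surjective (cylProj k l) := by
  have : NeZero k := ⟨hk.ne'⟩
  exact fun p => ⟨(p.1, p.2.val),
    by rw [cylProj_mk_natCast _ (ZMod.val_lt p.2), ZMod.natCast_zmod_val]⟩

theorem cylStep_vertical {a : ℤ} {m : ℕ} (hm : m + 2 ≤ k) (ha : Even (a + m)) :
    cylStep k l (a, m) (a, (m + 1 : ℕ)) := by
  rw [Int.even_iff] at ha
  refine Or.inr (Or.inl ⟨a / 2, m, hm, ?_⟩)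
  rcases Nat.even_or_odd m with hm' | hm'
  · have := Nat.even_iff.1 hm'
    exact Or.inl ⟨hm', Prod.ext (by omega) rfl, Prod.ext (by omega) rfl⟩
  · have := Nat.odd_iff.1 hm'
    exact Or.inr ⟨hm', Prod.ext (by omega) rfl, Prod.ext (by omega) rfl⟩

theorem cylStep_twisted (hk : 0 < k) {a : ℤ} (ha : Even (a + (k - 1 : ℕ))) :
    cylStep k l (a, ((k - 1 : ℕ) : ZMod k)) (a + l, 0) := by
  rw [Int.even_iff] at ha
  refine Or.inr (Or.inr ?_)
  rcases Nat.even_or_odd k with hk' | hk'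
  · have := Nat.even_iff.1 hk'
    exact Or.inl ⟨hk', a / 2, Prod.ext (by omega) rfl, Prod.ext (by omega) rfl⟩
  · have := Nat.odd_iff.1 hk'
    exact Or.inr ⟨hk', a / 2, Prod.ext (by omega) rfl, Prod.ext (by omega) rfl⟩

theorem cylStep_cylProj_of_brickStep_of_lt (hk : 0 < k) {x y : ℤ × ℤ} (h : brickStep x y)
    (hx0 : 0 ≤ x.2) (hxk : x.2 < k) : cylStep k l (cylProj k l x) (cylProj k l y) := by
  obtain ⟨a, b⟩ := x
  obtain ⟨c, d⟩ := y
  lift b to ℕ using hx0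
  have hbk : b < k := by simpa using hxk
  dsimp only [brickStep] at h
  rcases h with ⟨rfl, rfl⟩ | ⟨rfl, rfl, hab⟩
  · rw [cylProj_mk_natCast _ hbk, cylProj_mk_natCast _ hbk]
    exact Or.inl ⟨rfl, rfl⟩
  rw [cylProj_mk_natCast _ hbk]
  rcases (show b + 1 < k ∨ b = k - 1 by omega) with hb | rfl
  · rw [show (b : ℤ) + 1 = (b + 1 : ℕ) by push_cast; rfl, cylProj_mk_natCast _ hb]
    exact cylStep_vertical (by omega) hab
  · rw [show ((k - 1 : ℕ) : ℤ) + 1 = k by omega, cylProj_mk_self hk]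
    exact cylStep_twisted hk hab

theorem cylStep_cylProj_of_brickStep (hk : 0 < k) (hkl : Even ((k : ℤ) + l)) {x y : ℤ × ℤ}
    (h : brickStep x y) : cylStep k l (cylProj k l x) (cylProj k l y) := by
  -- translate the edge so that `x` lies in the strip `0 ≤ x.2 < k`
  rw [← cylProj_add_zsmul hk x (x.2 / k), ← cylProj_add_zsmul hk y (x.2 / k)]
  have hx2 : (x + (x.2 / k) • cylPeriod k l).2 = x.2 % k := by
    simp only [cylPeriod, Prod.smul_mk, Int.zsmul_eq_mul, mul_neg, Prod.snd_add, Int.emod_def]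
    ring
  exact cylStep_cylProj_of_brickStep_of_lt hk (h.add_zsmul hkl _)
    (hx2 ▸ Int.emod_nonneg _ (by omega)) (hx2 ▸ Int.emod_lt_of_pos _ (by omega))

theorem exists_brickStep_of_cylStep (hk : 0 < k) {p q : ℤ × ZMod k} (h : cylStep k l p q) :
    ∃ x y, brickStep x y ∧ cylProj k l x = p ∧ cylProj k l y = q := by
  rcases h with ⟨h1, h2⟩ | ⟨n, m, hm, ⟨hm', rfl, rfl⟩ | ⟨hm', rfl, rfl⟩⟩ |
    ⟨hk', n, rfl, rfl⟩ | ⟨hk', n, rfl, rfl⟩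
  · obtain ⟨x, rfl⟩ := cylProj_surjective (l := l) hk p
    refine ⟨x, x + (1, 0), Or.inl ⟨rfl, by simp⟩, rfl, Prod.ext ?_ ?_⟩
    · simp only [cylProj, Prod.fst_add, Prod.snd_add, add_zero, h1]
      ring
    · simp [cylProj, h2]
  · rw [Nat.even_iff] at hm'
    exact ⟨(2 * n, m), (2 * n, (m + 1 : ℕ)), Or.inr ⟨rfl, Nat.cast_succ m, by
        simp only [Int.even_iff]; omega⟩, cylProj_mk_natCast _ (by omega),
        cylProj_mk_natCast _ (by omega)⟩
  · rw [Nat.odd_iff] at hm'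
    exact ⟨(2 * n + 1, m), (2 * n + 1, (m + 1 : ℕ)), Or.inr ⟨rfl, Nat.cast_succ m, by
        simp only [Int.even_iff]; omega⟩, cylProj_mk_natCast _ (by omega),
        cylProj_mk_natCast _ (by omega)⟩
  · rw [Nat.even_iff] at hk'
    exact ⟨(2 * n + 1, (k - 1 : ℕ)), (2 * n + 1, k), Or.inr ⟨rfl, by omega, by
        simp only [Int.even_iff]; omega⟩, cylProj_mk_natCast _ (by omega), cylProj_mk_self hk _⟩
  · rw [Nat.odd_iff] at hk'
    exact ⟨(2 * n, (k - 1 : ℕ)), (2 * n, k), Or.inr ⟨rfl, by omega, by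
        simp only [Int.even_iff]; omega⟩, cylProj_mk_natCast _ (by omega), cylProj_mk_self hk _⟩

theorem twistedCylinder_eq_map (hk : 0 < k) (hkl : Even ((k : ℤ) + l)) :
    twistedCylinder k l = brickWall.map (cylProj k l) := by
  ext p q
  simp only [twistedCylinder, SimpleGraph.map_adj', brickWall, SimpleGraph.fromRel_adj]
  refine and_congr_right fun _ => ⟨?_, ?_⟩
  · rintro (h | h) <;> obtain ⟨x, y, hxy, rfl, rfl⟩ := exists_brickStep_of_cylStep hk h
    · exact ⟨x, y, ⟨hxy.ne, Or.inl hxy⟩, rfl, rfl⟩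
    · exact ⟨y, x, ⟨hxy.ne.symm, Or.inr hxy⟩, rfl, rfl⟩
  · rintro ⟨x, y, ⟨-, hxy | hyx⟩, rfl, rfl⟩
    · exact Or.inl (cylStep_cylProj_of_brickStep hk hkl hxy)
    · exact Or.inr (cylStep_cylProj_of_brickStep hk hkl hyx)

end Projection

def wallReflect (x : ℤ × ℤ) : ℤ × ℤ := ((-1 - x.1 - 3 * x.2) / 2, (x.2 - x.1) / 2)

theorem wallReflect_involutive : Function.Involutive wallReflect := fun x => by
  ext <;> simp only [wallReflect] <;> omega

theorem brickStep_wallReflect {x y : ℤ × ℤ} (h : brickStep x y) :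
    brickStep (wallReflect y) (wallReflect x) := by
  obtain ⟨a, b⟩ := x
  obtain ⟨c, d⟩ := y
  simp only [brickStep, wallReflect, Int.even_iff] at h ⊢
  omega

theorem brickWall_adj_wallReflect {x y : ℤ × ℤ} (h : brickWall.Adj x y) :
    brickWall.Adj (wallReflect x) (wallReflect y) := by
  obtain ⟨hne, hxy | hyx⟩ := h
  · exact ⟨wallReflect_involutive.injective.ne hne, Or.inr (brickStep_wallReflect hxy)⟩
  · exact ⟨wallReflect_involutive.injective.ne hne, Or.inl (brickStep_wallReflect hyx)⟩

def wallReflectIso : brickWall ≃g brickWall where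
  toEquiv := wallReflect_involutive.toPerm
  map_rel_iff' {x y} := by
    refine ⟨fun h => ?_, brickWall_adj_wallReflect⟩
    simpa only [Function.Involutive.coe_toPerm, wallReflect_involutive x,
      wallReflect_involutive y] using brickWall_adj_wallReflect h

@[simp]
theorem wallReflectIso_apply (x : ℤ × ℤ) : wallReflectIso x = wallReflect x := rfl

theorem wallReflect_add_zsmul {k K : ℕ} {l L : ℤ} (hK : 2 * (K : ℤ) = k + l)
    (hL : 2 * L = 3 * k - l) (x : ℤ × ℤ) (t : ℤ) :
    wallReflect (x + t • cylPeriod k l) = wallReflect x + t • cylPeriod K L := by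
  have h1 : -1 - (x.1 + t * l) - 3 * (x.2 + t * -k) = -1 - x.1 - 3 * x.2 + t * L * 2 := by
    linear_combination -t * hL
  have h2 : x.2 + t * -k - (x.1 + t * l) = x.2 - x.1 + t * -K * 2 := by
    linear_combination t * hK
  ext <;> simp only [wallReflect, cylPeriod, Prod.fst_add, Prod.snd_add, Prod.smul_fst,
    Prod.smul_snd, smul_eq_mul, h1, h2, Int.add_mul_ediv_right _ _ two_ne_zero]

theorem cylProj_eq_iff_cylProj_wallReflect_eq {k K : ℕ} {l L : ℤ} (hk : 0 < k) (hK0 : 0 < K)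
    (hK : 2 * (K : ℤ) = k + l) (hL : 2 * L = 3 * k - l) (x y : ℤ × ℤ) :
    cylProj k l x = cylProj k l y ↔
      cylProj K L (wallReflectIso x) = cylProj K L (wallReflectIso y) := by
  simp only [wallReflectIso_apply, cylProj_eq_cylProj_iff hk, cylProj_eq_cylProj_iff hK0,
    ← wallReflect_add_zsmul hK hL, wallReflect_involutive.injective.eq_iff]

theorem cylinder_isomorphism (k l : ℕ) (hk : 2 ≤ k) (hkl : Even (k + l)) :
    Nonempty (twistedCylinder k (l : ℤ) ≃g
      twistedCylinder ((k + l) / 2) ((3 * (k : ℤ) - l) / 2)) := by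
  have hpar : (k + l) % 2 = 0 := Nat.even_iff.1 hkl
  rw [twistedCylinder_eq_map (by omega) (by exact_mod_cast hkl),
    twistedCylinder_eq_map (by omega) ⟨k, by omega⟩]
  exact ⟨wallReflectIso.descend (cylProj_surjective (by omega)) (cylProj_surjective (by omega))
    (cylProj_eq_iff_cylProj_wallReflect_eq (by omega) (by omega) (by omega) (by omega))⟩
end

section
/- For any k ≥ 2 and l ∈ ℕ with k + l even, the twisted cubic cylinder W̄_{k,l} contains a Hamiltonian double ray. -/
/-- A Hamiltonian double ray in a graph `Γ`: a bijection `f : ℤ → V Γ` such that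
consecutive images are adjacent. -/
def HasHamiltonianDoubleRay {V : Type*} (Γ : SimpleGraph V) : Prop :=
  ∃ f : ℤ → V, Function.Bijective f ∧ ∀ n : ℤ, Γ.Adj (f n) (f (n + 1))

lemma ZMod.natCast_eq_natCast_iff_of_lt {k a b : ℕ} (ha : a < k) (hb : b < k) :
    (a : ZMod k) = b ↔ a = b := by
  rw [ZMod.natCast_eq_natCast_iff', Nat.mod_eq_of_lt ha, Nat.mod_eq_of_lt hb]

lemma Int.exists_eq_mul_mul_add_add {k X : ℕ} (hk : 0 < k) (hX : 0 < X) (t : ℤ) :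
    ∃ q : ℤ, ∃ m < k, ∃ i : ℤ, 0 ≤ i ∧ i < X ∧ t = X * (k * q + m) + i := by
  obtain ⟨ht, hi₀, hiX⟩ := (Int.ediv_emod_unique (a := t) (b := X) (by omega)).mp ⟨rfl, rfl⟩
  obtain ⟨hu, hm₀, hmk⟩ := (Int.ediv_emod_unique (a := t / X) (b := k) (by omega)).mp ⟨rfl, rfl⟩
  refine ⟨t / X / k, (t / X % k).toNat, by omega, t % X, hi₀, hiX, ?_⟩
  rw [Int.toNat_of_nonneg hm₀]
  linear_combination -ht - (X : ℤ) * hu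

lemma Int.mul_mul_add_mul_eq_iff_of_isUnit {X ε d q i c : ℤ} (hX : 0 < X) (hε : IsUnit ε)
    (hd : IsUnit d) (hi₀ : 0 ≤ i) (hiX : i < X) :
    ε * X * q + d * i = c ↔ q = ε * d * (d * c / X) ∧ i = d * c % X := by
  have hε₂ := Int.isUnit_mul_self hε
  have hd₂ := Int.isUnit_mul_self hd
  calc ε * X * q + d * i = c ↔ i + X * (ε * d * q) = d * c ∧ 0 ≤ i ∧ i < X := by
        simp only [hi₀, hiX, and_true]
        constructor <;> intro h
        · linear_combination d * h - i * hd₂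
        · linear_combination d * h - (ε * X * q - c) * hd₂
    _ ↔ d * c / X = ε * d * q ∧ d * c % X = i := (Int.ediv_emod_unique hX).symm
    _ ↔ q = ε * d * (d * c / X) ∧ i = d * c % X := by
        refine and_congr ⟨fun h ↦ ?_, fun h ↦ ?_⟩ eq_comm
        · linear_combination (-(ε * d)) * h - q * ε * ε * hd₂ - q * hε₂
        · linear_combination -(d * c / X) * ε * ε * hd₂ - (d * c / X) * hε₂ - ε * d * h

lemma sum_range_ite_lt (h n : ℕ) :
    ∑ j ∈ Finset.range n, (if j < h then (1 : ℤ) else -1) = 2 * (min h n : ℕ) - n := by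
  induction n with
  | zero => simp
  | succ n ih =>
    rw [Finset.sum_range_succ, ih]
    split_ifs <;> omega

namespace TwistedCylinder

section Edges

variable {k : ℕ} {l : ℤ}

lemma adj_add_one (c : ℤ) (m : ZMod k) : (twistedCylinder k l).Adj (c, m) (c + 1, m) :=
  ⟨by simp, Or.inl (Or.inl ⟨rfl, rfl⟩)⟩

lemma adj_add_of_isUnit {e : ℤ} (he : IsUnit e) (c : ℤ) (m : ZMod k) :
    (twistedCylinder k l).Adj (c, m) (c + e, m) := by
  rcases Int.isUnit_iff.mp he with rfl | rfl
  · exact adj_add_one c m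
  · simpa using (adj_add_one (l := l) (c + -1) m).symm

lemma adj_vertical {m : ℕ} (hm : m + 2 ≤ k) {c : ℤ} (hc : Even (c + m)) :
    (twistedCylinder k l).Adj (c, (m : ZMod k)) (c, ((m + 1 : ℕ) : ZMod k)) := by
  refine ⟨fun h ↦ ?_, Or.inl (Or.inr (Or.inl ⟨c / 2, m, hm, ?_⟩))⟩
  · have hrow := (Prod.mk.inj h).2
    rw [ZMod.natCast_eq_natCast_iff_of_lt (by omega) (by omega)] at hrow
    omega
  obtain ⟨b, hb⟩ := hc
  rcases Nat.even_or_odd m with ⟨a, ha⟩ | ⟨a, ha⟩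
  · have hc : c = 2 * (c / 2) := by push_cast [ha] at hb; omega
    exact Or.inl ⟨⟨a, ha⟩, by rw [← hc], by rw [← hc]⟩
  · have hc : c = 2 * (c / 2) + 1 := by push_cast [ha] at hb; omega
    exact Or.inr ⟨⟨a, ha⟩, by rw [← hc], by rw [← hc]⟩

lemma adj_twisted (hk : 2 ≤ k) {c : ℤ} (hc : Even (c + (k - 1 : ℕ))) :
    (twistedCylinder k l).Adj (c, ((k - 1 : ℕ) : ZMod k)) (c + l, 0) := by
  refine ⟨fun h ↦ ?_, Or.inl (Or.inr (Or.inr ?_))⟩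
  · have hrow := (Prod.mk.inj h).2
    rw [← Nat.cast_zero, ZMod.natCast_eq_natCast_iff_of_lt (by omega) (by omega)] at hrow
    omega
  obtain ⟨b, hb⟩ := hc
  rcases Nat.even_or_odd k with ⟨a, ha⟩ | ⟨a, ha⟩
  · have hc : c = 2 * (c / 2) + 1 := by push_cast [ha] at hb; omega
    exact Or.inl ⟨⟨a, ha⟩, c / 2, by rw [← hc], by rw [← hc]⟩
  · have hc : c = 2 * (c / 2) := by push_cast [ha] at hb; omega
    exact Or.inr ⟨⟨a, ha⟩, c / 2, by rw [← hc], by rw [← hc]⟩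

end Edges

section Snake

variable (k X : ℕ) (d : ℕ → ℤ) (ε : ℤ)

def rowStart (m : ℕ) : ℤ := 1 + ((X : ℤ) - 1) * ∑ j ∈ Finset.range m, d j

lemma rowStart_succ (m : ℕ) :
    rowStart X d (m + 1) = rowStart X d m + d m * ((X : ℤ) - 1) := by
  simp only [rowStart, Finset.sum_range_succ]
  ring

lemma odd_rowStart_add (hX : Even X) (hd : ∀ j, Odd (d j)) (m : ℕ) :
    Odd (rowStart X d m + m) := by
  induction m with
  | zero => simp [rowStart]
  | succ m ih =>
    have hX₁ : Odd ((X : ℤ) - 1) := ((Int.even_coe_nat X).mpr hX).sub_odd odd_one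
    convert (ih.add_odd (Int.odd_mul.mpr ⟨hd m, hX₁⟩)).add_one using 1
    rw [rowStart_succ]
    push_cast
    ring

def snake (t : ℤ) : ℤ × ZMod k :=
  let m := (t / X % k).toNat
  (ε * X * (t / X / k) + rowStart X d m + d m * (t % X), m)

variable {k X}

lemma snake_apply (hk : 0 < k) (hX : 0 < X) (q : ℤ) {m : ℕ} (hm : m < k) {i : ℤ}
    (hi₀ : 0 ≤ i) (hiX : i < X) :
    snake k X d ε (X * (k * q + m) + i) =
      (ε * X * q + rowStart X d m + d m * i, (m : ZMod k)) := by
  obtain ⟨hu, hi⟩ := (Int.ediv_emod_unique (a := X * (k * q + m) + i) (q := k * q + m)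
    (r := i) (by omega)).mpr ⟨by ring, hi₀, hiX⟩
  obtain ⟨hq, hm'⟩ := (Int.ediv_emod_unique (a := k * q + m) (b := k) (q := q) (r := m)
    (by omega)).mpr ⟨by ring, by omega, by omega⟩
  simp only [snake, hu, hi, hq, hm', Int.toNat_natCast]

lemma snake_bijective (hk : 0 < k) (hX : 0 < X) (hd : ∀ j, IsUnit (d j)) (hε : IsUnit ε) :
    Function.Bijective (snake k X d ε) := by
  have : NeZero k := ⟨hk.ne'⟩
  have hX' : (0 : ℤ) < X := by omega
  constructor
  · intro t₁ t₂ h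
    obtain ⟨q₁, m₁, hm₁, i₁, hi₁, hiX₁, rfl⟩ := Int.exists_eq_mul_mul_add_add hk hX t₁
    obtain ⟨q₂, m₂, hm₂, i₂, hi₂, hiX₂, rfl⟩ := Int.exists_eq_mul_mul_add_add hk hX t₂
    rw [snake_apply d ε hk hX q₁ hm₁ hi₁ hiX₁, snake_apply d ε hk hX q₂ hm₂ hi₂ hiX₂] at h
    obtain ⟨hcol, hrow⟩ := Prod.mk.inj h
    obtain rfl : m₁ = m₂ := (ZMod.natCast_eq_natCast_iff_of_lt hm₁ hm₂).mp hrow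
    have hc : ε * X * q₁ + d m₁ * i₁ = ε * X * q₂ + d m₁ * i₂ := by linarith
    obtain ⟨rfl, rfl⟩ := (Int.mul_mul_add_mul_eq_iff_of_isUnit hX' hε (hd m₁) hi₁ hiX₁).mp hc
    obtain ⟨hq, hi⟩ := (Int.mul_mul_add_mul_eq_iff_of_isUnit hX' hε (hd m₁) hi₂ hiX₂).mp rfl
    rw [← hq, ← hi]
  · rintro ⟨c, z⟩
    set m := z.val
    set j := d m * (c - rowStart X d m)
    have hj₀ : 0 ≤ j % X := Int.emod_nonneg j (by omega)
    have hjX : j % X < X := Int.emod_lt_of_pos j hX'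
    refine ⟨X * (k * (ε * d m * (j / X)) + m) + j % X, ?_⟩
    rw [snake_apply d ε hk hX _ (ZMod.val_lt z) hj₀ hjX, ZMod.natCast_zmod_val]
    have hcol := (Int.mul_mul_add_mul_eq_iff_of_isUnit (c := c - rowStart X d m) hX' hε (hd m)
      hj₀ hjX).mpr ⟨rfl, rfl⟩
    ext
    · dsimp only
      linarith
    · rfl

lemma adj_snake_add_one (hk : 2 ≤ k) (hX : Even X) (hX₀ : 0 < X) (hd : ∀ j, IsUnit (d j))
    {l : ℤ} (hclose : ((X : ℤ) - 1) * ∑ j ∈ Finset.range k, d j + l = ε * X) (t : ℤ) :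
    (twistedCylinder k l).Adj (snake k X d ε t) (snake k X d ε (t + 1)) := by
  obtain ⟨q, m, hm, i, hi₀, hiX, rfl⟩ := Int.exists_eq_mul_mul_add_add (k := k) (by omega) hX₀ t
  rw [snake_apply d ε (by omega) hX₀ q hm hi₀ hiX]
  rcases (show i + 1 < X ∨ i = X - 1 by omega) with hi | rfl
  · rw [show X * (k * q + m) + i + 1 = X * (k * q + m) + (i + 1) by ring,
      snake_apply d ε (by omega) hX₀ q hm (by omega) hi,
      show ε * X * q + rowStart X d m + d m * (i + 1) =
        ε * X * q + rowStart X d m + d m * i + d m by ring]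
    exact adj_add_of_isUnit (hd m) _ _
  have hend : ε * X * q + rowStart X d m + d m * (X - 1) = ε * X * q + rowStart X d (m + 1) := by
    rw [rowStart_succ]
    ring
  have hparity : Even (ε * X * q + rowStart X d (m + 1) + m) := by
    have hodd := odd_rowStart_add X d hX (fun j ↦ (Int.isUnit_iff.mp (hd j)).elim
      (fun h ↦ h ▸ odd_one) (fun h ↦ h ▸ odd_neg_one)) (m + 1)
    have hεXq : Even (ε * X * q) := (((Int.even_coe_nat X).mpr hX).mul_left ε).mul_right q
    have h := hodd.sub_odd odd_one
    rw [Nat.cast_succ, add_sub_assoc, add_sub_cancel_right] at h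
    rw [add_assoc]
    exact hεXq.add h
  rw [hend]
  rcases (show m + 1 < k ∨ m = k - 1 by omega) with hm' | rfl
  · rw [show X * (k * q + m) + (X - 1) + 1 = X * (k * q + (m + 1 : ℕ)) + 0 by push_cast; ring,
      snake_apply d ε (by omega) hX₀ q hm' le_rfl (by omega), mul_zero, add_zero]
    exact adj_vertical (by omega) hparity
  · rw [show X * (k * q + (k - 1 : ℕ)) + (X - 1) + 1 = X * (k * (q + 1) + (0 : ℕ)) + 0 by
        push_cast [Nat.cast_sub (by omega : 1 ≤ k)]; ring,
      snake_apply d ε (by omega) hX₀ (q + 1) (by omega) le_rfl (by omega), Nat.cast_zero]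
    convert adj_twisted hk hparity using 2
    rw [Nat.sub_add_cancel (by omega : 1 ≤ k)]
    simp only [rowStart, Finset.range_zero, Finset.sum_empty]
    linear_combination -hclose

theorem hasHamiltonianDoubleRay_of_sum_eq (hk : 2 ≤ k) (hX : Even X) (hX₀ : 0 < X)
    (hd : ∀ j, IsUnit (d j)) (hε : IsUnit ε) {l : ℤ}
    (hclose : ((X : ℤ) - 1) * ∑ j ∈ Finset.range k, d j + l = ε * X) :
    HasHamiltonianDoubleRay (twistedCylinder k l) :=
  ⟨snake k X d ε, snake_bijective d ε (by omega) hX₀ hd hε,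
    adj_snake_add_one d ε hk hX hX₀ hd hclose⟩

end Snake

lemma exists_snake_parameters {k l : ℕ} (hk : 2 ≤ k) (hkl : Even (k + l)) :
    ∃ X h : ℕ, ∃ ε : ℤ, Even X ∧ 0 < X ∧ IsUnit ε ∧ h ≤ k ∧
      ((X : ℤ) - 1) * (2 * h - k) + l = ε * X := by
  obtain ⟨a, ha⟩ := hkl
  rcases Nat.even_or_odd l with ⟨b, hb⟩ | ⟨b, hb⟩
  · refine ⟨l + 2, k / 2 - 1, -1, ⟨b + 1, by omega⟩, by omega, isUnit_one.neg, by omega, ?_⟩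
    rw [show 2 * ((k / 2 - 1 : ℕ) : ℤ) - k = -2 by omega]
    push_cast
    ring
  rcases Nat.even_or_odd b with ⟨c, hc⟩ | ⟨c, hc⟩
  · refine ⟨c + 1 + c + 1, (k - 3) / 2, -1, ⟨c + 1, rfl⟩, by omega, isUnit_one.neg, by omega, ?_⟩
    rw [show 2 * (((k - 3) / 2 : ℕ) : ℤ) - k = -3 by omega]
    push_cast
    omega
  · refine ⟨c + 1 + c + 1, (k - 1) / 2, 1, ⟨c + 1, rfl⟩, by omega, isUnit_one, by omega, ?_⟩
    rw [show 2 * (((k - 1) / 2 : ℕ) : ℤ) - k = -1 by omega]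
    push_cast
    omega

end TwistedCylinder

theorem cylinder_hamiltonian_double_ray (k l : ℕ) (hk : 2 ≤ k) (hkl : Even (k + l)) :
    HasHamiltonianDoubleRay (twistedCylinder k (l : ℤ)) := by
  obtain ⟨X, h, ε, hX, hX₀, hε, hhk, hclose⟩ := TwistedCylinder.exists_snake_parameters hk hkl
  refine TwistedCylinder.hasHamiltonianDoubleRay_of_sum_eq
    (fun j ↦ if j < h then 1 else -1) ε hk hX hX₀ (fun j ↦ ?_) hε ?_
  · split_ifs
    exacts [isUnit_one, isUnit_one.neg]
  · rwa [sum_range_ite_lt, min_eq_left hhk]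
end
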